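/- arXiv:2312.15217 — 5 statements merged into one kernel-verified Lean document; each statement's English description precedes it below -/
import Mathlib

section
/- Suppose E‖X‖² < ∞ and θ̂_n : Ω → ℝ^p are random vectors with θ̂_n → θ₀ in probability. Define g(t) = E[‖φ(A, X, t) − φ(A, X, θ₀)‖²] for t ∈ ℝ^p (expectation over (X, A)). Then the random variables g(θ̂_n) converge to 0 in probability as n → ∞. (This verifies Assumption 2 of the paper for the logistic propensity model.) -/
open MeasureTheory Filter Topology Real
open scoped ENNReal RealInnerProductSpace

noncomputable def cfun (a s : ℝ) : ℝ := (2 * a - 1) * Real.exp (a * s) / (1 + Real.exp s) ^ 2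

lemma cfun_cont : Continuous (fun q : ℝ × ℝ => cfun q.1 q.2) := by
  unfold cfun
  apply Continuous.div
  · fun_prop
  · fun_prop
  · intro q
    have : (0:ℝ) < (1 + Real.exp q.2) ^ 2 := by positivity
    exact this.ne'

lemma cfun_abs_le (a s : ℝ) (ha : a = 0 ∨ a = 1) : |cfun a s| ≤ 1 := by
  have hD : (0:ℝ) < (1 + Real.exp s) ^ 2 := by positivity
  unfold cfun
  rw [abs_div, abs_of_pos hD, div_le_one hD]
  have hN : |(2 * a - 1) * Real.exp (a * s)| = Real.exp (a * s) := by
    rw [abs_mul, abs_of_pos (Real.exp_pos _)]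
    rcases ha with h | h <;> subst h <;> norm_num
  rw [hN]
  rcases ha with h | h <;> subst h <;>
    simp only [zero_mul, one_mul, Real.exp_zero] <;>
    nlinarith [Real.exp_pos s, sq_nonneg (Real.exp s)]
/-- If `E‖X‖² < ∞` and `θ̂_n → θ₀` in probability, then
`g(θ̂_n) → 0` in probability, where
`g(t) = E[‖φ(A, X, t) − φ(A, X, θ₀)‖²]` and
`φ(a,x,θ) = (2a − 1) exp(a⟨θ,x⟩)/(1 + exp(⟨θ,x⟩))² · x`. -/
theorem stmt_4
    {Ω : Type*} [MeasurableSpace Ω] (P : Measure Ω) [IsProbabilityMeasure P]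
    {p : ℕ}
    (X : Ω → EuclideanSpace ℝ (Fin p)) (A : Ω → ℝ)
    (hX : Measurable X) (hA : Measurable A)
    (hA01 : ∀ ω, A ω = 0 ∨ A ω = 1)
    (hX2 : Integrable (fun ω => ‖X ω‖ ^ 2) P)
    (θ0 : EuclideanSpace ℝ (Fin p))
    (θhat : ℕ → Ω → EuclideanSpace ℝ (Fin p))
    (hθmeas : ∀ n, Measurable (θhat n))
    -- `θ̂_n → θ₀` in probability
    (hθprob : ∀ δ : ℝ, 0 < δ →
      Tendsto (fun n : ℕ => P {ω | δ < ‖θhat n ω - θ0‖}) atTop (𝓝 0))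
    (φ : ℝ → EuclideanSpace ℝ (Fin p) → EuclideanSpace ℝ (Fin p) → EuclideanSpace ℝ (Fin p))
    (hφ : ∀ a x θ, φ a x θ =
      ((2 * a - 1) * Real.exp (a * ⟪θ, x⟫) / (1 + Real.exp ⟪θ, x⟫) ^ 2) • x)
    (g : EuclideanSpace ℝ (Fin p) → ℝ)
    (hg : ∀ t, g t = ∫ ω, ‖φ (A ω) (X ω) t - φ (A ω) (X ω) θ0‖ ^ 2 ∂P) :
    ∀ δ : ℝ, 0 < δ →
      Tendsto (fun n : ℕ => P {ω | δ < |g (θhat n ω)|}) atTop (𝓝 0) := by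

  -- rewrite integrand using cfun
  have hdiff : ∀ t ω, φ (A ω) (X ω) t - φ (A ω) (X ω) θ0
      = (cfun (A ω) ⟪t, X ω⟫ - cfun (A ω) ⟪θ0, X ω⟫) • X ω := by
    intro t ω
    rw [hφ, hφ, ← sub_smul]
    rfl
  set F : EuclideanSpace ℝ (Fin p) → Ω → ℝ :=
    fun t ω => ‖φ (A ω) (X ω) t - φ (A ω) (X ω) θ0‖ ^ 2 with hFdef
  have hgF : g = fun t => ∫ ω, F t ω ∂P := by
    funext t; exact hg t
  -- measurability of the inner products
  have hinner : ∀ t : EuclideanSpace ℝ (Fin p), Measurable (fun ω => ⟪t, X ω⟫) := fun t =>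
    (measurable_const.inner hX)
  have hcω : ∀ t, Measurable (fun ω => cfun (A ω) ⟪t, X ω⟫) := fun t =>
    cfun_cont.measurable.comp (hA.prodMk (hinner t))
  have hFmeas : ∀ t, AEStronglyMeasurable (F t) P := by
    intro t
    have : Measurable (F t) := by
      simp only [hFdef, hdiff]
      exact ((((hcω t).sub (hcω θ0)).smul hX).norm.pow_const 2)
    exact this.aestronglyMeasurable
  -- bound
  have hbound : ∀ t ω, ‖F t ω‖ ≤ 4 * ‖X ω‖ ^ 2 := by
    intro t ω
    have h1 : |cfun (A ω) ⟪t, X ω⟫| ≤ 1 := cfun_abs_le _ _ (hA01 ω)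
    have h2 : |cfun (A ω) ⟪θ0, X ω⟫| ≤ 1 := cfun_abs_le _ _ (hA01 ω)
    have hF : F t ω = |cfun (A ω) ⟪t, X ω⟫ - cfun (A ω) ⟪θ0, X ω⟫| ^ 2 * ‖X ω‖ ^ 2 := by
      simp only [hFdef]
      rw [hdiff t ω, norm_smul, mul_pow, Real.norm_eq_abs]
    have habs : |cfun (A ω) ⟪t, X ω⟫ - cfun (A ω) ⟪θ0, X ω⟫| ≤ 2 := by
      calc |cfun (A ω) ⟪t, X ω⟫ - cfun (A ω) ⟪θ0, X ω⟫|
          ≤ |cfun (A ω) ⟪t, X ω⟫| + |cfun (A ω) ⟪θ0, X ω⟫| := abs_sub _ _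
        _ ≤ 2 := by linarith
    have hFnn : 0 ≤ F t ω := by simp only [hFdef]; positivity
    rw [Real.norm_eq_abs, abs_of_nonneg hFnn, hF]
    have hsq : |cfun (A ω) ⟪t, X ω⟫ - cfun (A ω) ⟪θ0, X ω⟫| ^ 2 ≤ 4 := by
      nlinarith [abs_nonneg (cfun (A ω) ⟪t, X ω⟫ - cfun (A ω) ⟪θ0, X ω⟫)]
    nlinarith [mul_le_mul_of_nonneg_right hsq (sq_nonneg (‖X ω‖))]
  -- continuity in t, for fixed ω
  have hcont_t : ∀ ω, ContinuousAt (fun t => F t ω) θ0 := by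
    intro ω
    have : Continuous (fun t => F t ω) := by
      simp only [hFdef, hdiff]
      have hc1 : Continuous (fun t : EuclideanSpace ℝ (Fin p) => cfun (A ω) ⟪t, X ω⟫) :=
        cfun_cont.comp (continuous_const.prodMk (continuous_id.inner continuous_const))
      exact (((hc1.sub continuous_const).smul continuous_const).norm.pow 2)
    exact this.continuousAt
  -- continuity of g at θ0
  have hgcont : ContinuousAt g θ0 := by
    rw [hgF]
    exact continuousAt_of_dominated
      (Eventually.of_forall hFmeas)
      (Eventually.of_forall fun t => ae_of_all _ (hbound t))
      (hX2.const_mul 4)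
      (ae_of_all _ hcont_t)
  -- g θ0 = 0
  have hg0 : g θ0 = 0 := by
    rw [hg θ0]
    simp
  intro δ hδ
  -- pick ε from continuity
  have hnhds : {t | |g t| < δ} ∈ 𝓝 θ0 := by
    have : Tendsto g (𝓝 θ0) (𝓝 0) := hg0 ▸ hgcont
    have h2 : {x : ℝ | |x| < δ} ∈ 𝓝 (0:ℝ) := by
      have : Metric.ball (0:ℝ) δ ∈ 𝓝 (0:ℝ) := Metric.ball_mem_nhds _ hδ
      simpa [Metric.ball, Real.dist_eq] using this
    exact this h2
  obtain ⟨ε, hε, hball⟩ := Metric.mem_nhds_iff.mp hnhds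
  have hεhalf : 0 < ε / 2 := by linarith
  have hsub : ∀ n, {ω | δ < |g (θhat n ω)|} ⊆ {ω | ε / 2 < ‖θhat n ω - θ0‖} := by
    intro n ω hω
    simp only [Set.mem_setOf_eq] at hω ⊢
    by_contra hcon
    push_neg at hcon
    have hmem : θhat n ω ∈ Metric.ball θ0 ε := by
      rw [Metric.mem_ball, dist_eq_norm]
      linarith
    have := hball hmem
    simp only [Set.mem_setOf_eq] at this
    linarith
  have h0 : Tendsto (fun _ : ℕ => (0:ℝ≥0∞)) atTop (𝓝 0) := tendsto_const_nhds
  exact tendsto_of_tendsto_of_tendsto_of_le_of_le h0 (hθprob (ε/2) hεhalf)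
    (fun n => zero_le) (fun n => measure_mono (hsub n))
end

section
/- (Consistency of the empirical variance estimator with plugged-in values, known propensity case.) Let d₁, d₂ be measurable decision rules and suppose E[Y²] < ∞. For j = 1, 2, define Û_{i,j} = (Y_i − V̂_j^{(m)}) 1{A_i = d_j(X_i)}/π₀(A_i|X_i), where V̂_j^{(m)} are real random variables with V̂_j^{(m)} → V₀(d_j) in probability as m → ∞, and let Ū_j = m^{−1} Σ_{i=1}^m Û_{i,j}. Then m^{−1} Σ_{i=1}^m (Û_{i,1} − Û_{i,2} − Ū_1 + Ū_2)² converges in probability, as m → ∞, to Var(U₀^{(1)} − U₀^{(2)}), where U₀^{(j)} = (Y − V₀(d_j)) 1{A = d_j(X)}/π₀(A|X). -/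
open MeasureTheory ProbabilityTheory Filter Topology Real
open scoped ENNReal

section AuxP
variable {Ω : Type*} [MeasurableSpace Ω] {P : Measure Ω}

/-- Convergence in probability to a constant. -/
def TendstoP (P : Measure Ω) (f : ℕ → Ω → ℝ) (a : ℝ) : Prop :=
  ∀ ε : ℝ, 0 < ε → Tendsto (fun m => P {ω | ε ≤ |f m ω - a|}) atTop (𝓝 0)

theorem tendstoP_congr {f g : ℕ → Ω → ℝ} {a : ℝ} (h : ∀ m ω, f m ω = g m ω)
    (hf : TendstoP P f a) : TendstoP P g a := by
  intro ε hε
  have := hf ε hε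
  convert this using 2 with m
  congr 1
  ext ω
  simp only [Set.mem_setOf_eq, h m ω]

theorem TendstoP.congr_lim {f : ℕ → Ω → ℝ} {a b : ℝ} (hf : TendstoP P f a) (h : a = b) :
    TendstoP P f b := h ▸ hf

theorem TendstoP.const (a : ℝ) : TendstoP P (fun _ _ => a) a := by
  intro ε hε
  have hset : {ω : Ω | ε ≤ |a - a|} = (∅ : Set Ω) := by
    ext ω; simp; linarith
  simp only [hset, measure_empty]
  exact tendsto_const_nhds

theorem TendstoP.add {f g : ℕ → Ω → ℝ} {a b : ℝ} (hf : TendstoP P f a) (hg : TendstoP P g b) :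
    TendstoP P (fun m ω => f m ω + g m ω) (a + b) := by
  intro ε hε
  have h2 : (0:ℝ) < ε/2 := by linarith
  refine tendsto_of_tendsto_of_tendsto_of_le_of_le (g := fun _ => (0:ℝ≥0∞))
    (h := fun m => P {ω | ε/2 ≤ |f m ω - a|} + P {ω | ε/2 ≤ |g m ω - b|})
    tendsto_const_nhds ?_ (fun m => zero_le) (fun m => ?_)
  · simpa using (hf (ε/2) h2).add (hg (ε/2) h2)
  · refine le_trans (measure_mono ?_) (measure_union_le _ _)
    intro ω hω
    simp only [Set.mem_setOf_eq, Set.mem_union] at hω ⊢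
    by_contra h
    push_neg at h
    have key : |f m ω + g m ω - (a + b)| ≤ |f m ω - a| + |g m ω - b| := by
      have h1 : f m ω + g m ω - (a + b) = (f m ω - a) + (g m ω - b) := by ring
      rw [h1]; exact abs_add_le _ _
    linarith [h.1, h.2]

theorem TendstoP.neg {f : ℕ → Ω → ℝ} {a : ℝ} (hf : TendstoP P f a) :
    TendstoP P (fun m ω => -f m ω) (-a) := by
  intro ε hε
  have := hf ε hε
  convert this using 2 with m
  congr 1
  ext ω
  simp only [Set.mem_setOf_eq]
  rw [show -f m ω - -a = -(f m ω - a) by ring, abs_neg]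

theorem TendstoP.sub {f g : ℕ → Ω → ℝ} {a b : ℝ} (hf : TendstoP P f a) (hg : TendstoP P g b) :
    TendstoP P (fun m ω => f m ω - g m ω) (a - b) := by
  have := hf.add hg.neg
  refine tendstoP_congr (fun m ω => ?_) this
  ring

theorem TendstoP.mul {f g : ℕ → Ω → ℝ} {a b : ℝ} (hf : TendstoP P f a) (hg : TendstoP P g b) :
    TendstoP P (fun m ω => f m ω * g m ω) (a * b) := by
  intro ε hε
  set η1 : ℝ := min 1 (ε / (3 * (|b| + 1))) with hη1def
  set η2 : ℝ := ε / (3 * (|a| + 1)) with hη2def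
  have hb1 : (0:ℝ) < |b| + 1 := by positivity
  have ha1 : (0:ℝ) < |a| + 1 := by positivity
  have hη1 : 0 < η1 := lt_min one_pos (by positivity)
  have hη2 : 0 < η2 := by positivity
  refine tendsto_of_tendsto_of_tendsto_of_le_of_le (g := fun _ => (0:ℝ≥0∞))
    (h := fun m => P {ω | η1 ≤ |f m ω - a|} + P {ω | η2 ≤ |g m ω - b|})
    tendsto_const_nhds ?_ (fun m => zero_le) (fun m => ?_)
  · simpa using (hf η1 hη1).add (hg η2 hη2)
  · refine le_trans (measure_mono ?_) (measure_union_le _ _)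
    intro ω hω
    simp only [Set.mem_setOf_eq, Set.mem_union] at hω ⊢
    by_contra h
    push_neg at h
    obtain ⟨h1, h2⟩ := h
    have e1 : |f m ω - a| < η1 := h1
    have e2 : |g m ω - b| < η2 := h2
    have key : |f m ω * g m ω - a * b|
        ≤ |f m ω - a| * |g m ω - b| + |a| * |g m ω - b| + |b| * |f m ω - a| := by
      have h1' : f m ω * g m ω - a * b
          = (f m ω - a) * (g m ω - b) + a * (g m ω - b) + b * (f m ω - a) := by ring
      rw [h1']
      calc |(f m ω - a) * (g m ω - b) + a * (g m ω - b) + b * (f m ω - a)|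
          ≤ |(f m ω - a) * (g m ω - b) + a * (g m ω - b)| + |b * (f m ω - a)| := abs_add_le _ _
        _ ≤ |(f m ω - a) * (g m ω - b)| + |a * (g m ω - b)| + |b * (f m ω - a)| := by
            gcongr; exact abs_add_le _ _
        _ = |f m ω - a| * |g m ω - b| + |a| * |g m ω - b| + |b| * |f m ω - a| := by
            rw [abs_mul, abs_mul, abs_mul]
    have hη1le1 : η1 ≤ 1 := min_le_left _ _
    have hη1le : η1 ≤ ε / (3 * (|b| + 1)) := min_le_right _ _
    have b1 : |f m ω - a| * |g m ω - b| ≤ 1 * η2 :=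
      mul_le_mul (le_trans e1.le hη1le1) e2.le (abs_nonneg _) zero_le_one
    have b2 : |a| * |g m ω - b| ≤ |a| * η2 :=
      mul_le_mul_of_nonneg_left e2.le (abs_nonneg _)
    have b3 : |b| * |f m ω - a| ≤ |b| * η1 :=
      mul_le_mul_of_nonneg_left e1.le (abs_nonneg _)
    have c1 : 1 * η2 + |a| * η2 = ε / 3 := by
      rw [hη2def]; field_simp; ring
    have c2 : |b| * η1 ≤ ε / 3 := by
      calc |b| * η1 ≤ (|b| + 1) * (ε / (3 * (|b| + 1))) :=
            mul_le_mul (by linarith) hη1le hη1.le (by linarith)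
        _ = ε / 3 := by field_simp
    have : |f m ω * g m ω - a * b| ≤ ε / 3 + ε / 3 := by linarith
    linarith

theorem TendstoP.sq {f : ℕ → Ω → ℝ} {a : ℝ} (hf : TendstoP P f a) :
    TendstoP P (fun m ω => (f m ω) ^ 2) (a ^ 2) := by
  have := hf.mul hf
  refine tendstoP_congr (fun m ω => ?_) (by rw [show a^2 = a*a by ring]; exact this)
  ring

theorem tendstoP_of_ae [IsFiniteMeasure P] {f : ℕ → Ω → ℝ} {a : ℝ}
    (hf : ∀ m, AEStronglyMeasurable (f m) P)
    (h : ∀ᵐ ω ∂P, Tendsto (fun m => f m ω) atTop (𝓝 a)) : TendstoP P f a := by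
  have htm : TendstoInMeasure P f atTop (fun _ => a) := tendstoInMeasure_of_tendsto_ae hf h
  intro ε hε
  have := tendstoInMeasure_iff_dist.1 htm ε hε
  have hset : ∀ m : ℕ, {ω | ε ≤ dist (f m ω) a} = {ω | ε ≤ |f m ω - a|} := by
    intro m; ext ω; simp [Real.dist_eq]
  simpa [hset] using this

end AuxP

section AuxSum
open Finset

theorem emp_var_aux (m : ℕ) (D : ℕ → ℝ) :
    (m:ℝ)⁻¹ * ∑ i ∈ range m, (D i - (m:ℝ)⁻¹ * ∑ j ∈ range m, D j)^2
    = (m:ℝ)⁻¹ * ∑ i ∈ range m, (D i)^2 - ((m:ℝ)⁻¹ * ∑ j ∈ range m, D j)^2 := by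
  rcases Nat.eq_zero_or_pos m with hm | hm
  · simp [hm]
  have hm' : (m:ℝ) ≠ 0 := Nat.cast_ne_zero.2 hm.ne'
  set μ := (m:ℝ)⁻¹ * ∑ j ∈ range m, D j with hμ
  have hsum : ∑ i ∈ range m, D i = m * μ := by rw [hμ]; field_simp
  have hexp : ∑ i ∈ range m, (D i - μ)^2
      = ∑ i ∈ range m, (D i)^2 - 2*μ*∑ i ∈ range m, D i + m*μ^2 := by
    have h1 : ∀ i ∈ range m, (D i - μ)^2 = (D i)^2 - 2*μ*D i + μ^2 := fun i _ => by ring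
    rw [Finset.sum_congr rfl h1]
    rw [Finset.sum_add_distrib, Finset.sum_sub_distrib, ← Finset.mul_sum, Finset.sum_const,
      Finset.card_range, nsmul_eq_mul]
  rw [hexp, hsum]
  field_simp
  ring

theorem sum_expand_aux (m : ℕ) (c1 c2 : ℝ) (a b d : ℕ → ℝ) :
    ∑ i ∈ range m, (a i - c1 * b i + c2 * d i)^2
    = ∑ i ∈ range m, (a i)^2 - 2*c1*∑ i ∈ range m, a i * b i
      + 2*c2*∑ i ∈ range m, a i * d i + c1^2*∑ i ∈ range m, (b i)^2
      + c2^2*∑ i ∈ range m, (d i)^2 - 2*(c1*c2)*∑ i ∈ range m, b i * d i := by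
  have h1 : ∀ i ∈ range m, (a i - c1 * b i + c2 * d i)^2
      = (a i)^2 - 2*c1*(a i * b i) + 2*c2*(a i * d i) + c1^2*(b i)^2 + c2^2*(d i)^2
        - 2*(c1*c2)*(b i * d i) := fun i _ => by ring
  rw [Finset.sum_congr rfl h1]
  rw [Finset.sum_sub_distrib, Finset.sum_add_distrib, Finset.sum_add_distrib,
    Finset.sum_add_distrib, Finset.sum_sub_distrib, ← Finset.mul_sum, ← Finset.mul_sum,
    ← Finset.mul_sum, ← Finset.mul_sum, ← Finset.mul_sum]

theorem sum_lin_aux (m : ℕ) (c1 c2 : ℝ) (a b d : ℕ → ℝ) :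
    ∑ i ∈ range m, (a i - c1 * b i + c2 * d i)
    = ∑ i ∈ range m, a i - c1*∑ i ∈ range m, b i + c2*∑ i ∈ range m, d i := by
  rw [Finset.sum_add_distrib, Finset.sum_sub_distrib, ← Finset.mul_sum, ← Finset.mul_sum]

theorem stat_eq_aux (m : ℕ) (c1 c2 : ℝ) (a b d : ℕ → ℝ) :
    (m:ℝ)⁻¹ * ∑ i ∈ range m,
        ((a i - c1 * b i + c2 * d i) - (m:ℝ)⁻¹ * ∑ j ∈ range m, (a j - c1 * b j + c2 * d j))^2
    = ((m:ℝ)⁻¹ * ∑ i ∈ range m, (a i)^2)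
      - 2*c1*((m:ℝ)⁻¹ * ∑ i ∈ range m, a i * b i)
      + 2*c2*((m:ℝ)⁻¹ * ∑ i ∈ range m, a i * d i)
      + c1^2*((m:ℝ)⁻¹ * ∑ i ∈ range m, (b i)^2)
      + c2^2*((m:ℝ)⁻¹ * ∑ i ∈ range m, (d i)^2)
      - 2*(c1*c2)*((m:ℝ)⁻¹ * ∑ i ∈ range m, b i * d i)
      - (((m:ℝ)⁻¹ * ∑ i ∈ range m, a i) - c1*((m:ℝ)⁻¹ * ∑ i ∈ range m, b i)
          + c2*((m:ℝ)⁻¹ * ∑ i ∈ range m, d i))^2 := by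
  have h := emp_var_aux m (fun i => a i - c1 * b i + c2 * d i)
  rw [h, sum_expand_aux, sum_lin_aux]
  ring

end AuxSum

noncomputable def auxg {α : Type*} (π0 : Bool → α → ℝ) (d : α → Bool)
    (z : α × Bool × ℝ) : ℝ :=
  (if z.2.1 = d z.1 then (1:ℝ) else 0) / π0 z.2.1 z.1

noncomputable def auxs {α : Type*} (π0 : Bool → α → ℝ) (d1 d2 : α → Bool)
    (V01 V02 : ℝ) (z : α × Bool × ℝ) : ℝ :=
  (z.2.2 - V01) * auxg π0 d1 z - (z.2.2 - V02) * auxg π0 d2 z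

section MeasAux
variable {α : Type*} [MeasurableSpace α]

theorem auxg_measurable {π0 : Bool → α → ℝ} {d : α → Bool}
    (hπ : ∀ a, Measurable (π0 a)) (hd : Measurable d) :
    Measurable (auxg π0 d) := by
  have hset : MeasurableSet {z : α × Bool × ℝ | z.2.1 = d z.1} := by
    have hm : Measurable (fun z : α × Bool × ℝ => (z.2.1, d z.1)) :=
      (measurable_snd.fst).prodMk (hd.comp measurable_fst)
    have : {z : α × Bool × ℝ | z.2.1 = d z.1}
        = (fun z : α × Bool × ℝ => (z.2.1, d z.1)) ⁻¹' {q : Bool × Bool | q.1 = q.2} := rfl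
    rw [this]
    exact hm (Set.to_countable _).measurableSet
  have hπm : Measurable (fun z : α × Bool × ℝ => π0 z.2.1 z.1) := by
    have : (fun z : α × Bool × ℝ => π0 z.2.1 z.1)
        = fun z : α × Bool × ℝ => if z.2.1 = true then π0 true z.1 else π0 false z.1 := by
      funext z; rcases z with ⟨x, a, y⟩; cases a <;> simp
    rw [this]
    refine Measurable.ite ?_ ((hπ true).comp measurable_fst) ((hπ false).comp measurable_fst)
    exact (measurable_snd.fst) (measurableSet_singleton true)
  exact (Measurable.ite hset measurable_const measurable_const).div hπm

theorem auxs_measurable {π0 : Bool → α → ℝ} {d1 d2 : α → Bool} {V01 V02 : ℝ}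
    (hπ : ∀ a, Measurable (π0 a)) (hd1 : Measurable d1) (hd2 : Measurable d2) :
    Measurable (auxs π0 d1 d2 V01 V02) :=
  (((measurable_snd.snd).sub measurable_const).mul (auxg_measurable hπ hd1)).sub
    (((measurable_snd.snd).sub measurable_const).mul (auxg_measurable hπ hd2))

theorem auxg_abs_le {π0 : Bool → α → ℝ} {d : α → Bool} {ε : ℝ} (hε : 0 < ε)
    (hπ0ε : ∀ a x, ε ≤ π0 a x) (z : α × Bool × ℝ) : |auxg π0 d z| ≤ ε⁻¹ := by
  have h1 : |if z.2.1 = d z.1 then (1:ℝ) else 0| ≤ 1 := by split <;> simp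
  have h2 : ε ≤ |π0 z.2.1 z.1| := le_trans (hπ0ε _ _) (le_abs_self _)
  rw [auxg, abs_div]
  calc |if z.2.1 = d z.1 then (1:ℝ) else 0| / |π0 z.2.1 z.1| ≤ 1 / ε :=
        div_le_div₀ zero_le_one h1 hε h2
    _ = ε⁻¹ := one_div ε

theorem auxs_abs_le {π0 : Bool → α → ℝ} {d1 d2 : α → Bool} {V01 V02 ε : ℝ} (hε : 0 < ε)
    (hπ0ε : ∀ a x, ε ≤ π0 a x) (z : α × Bool × ℝ) :
    |auxs π0 d1 d2 V01 V02 z| ≤ ((2 + |V01| + |V02|) * ε⁻¹) * (|z.2.2| + 1) := by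
  have h1 := auxg_abs_le hε hπ0ε (d := d1) z
  have h2 := auxg_abs_le hε hπ0ε (d := d2) z
  have hy : (0:ℝ) ≤ |z.2.2| := abs_nonneg _
  have hεi : (0:ℝ) < ε⁻¹ := by positivity
  have hV1 : (0:ℝ) ≤ |V01| := abs_nonneg _
  have hV2 : (0:ℝ) ≤ |V02| := abs_nonneg _
  have step : |auxs π0 d1 d2 V01 V02 z|
      ≤ |z.2.2 - V01| * |auxg π0 d1 z| + |z.2.2 - V02| * |auxg π0 d2 z| := by
    rw [auxs, sub_eq_add_neg]
    refine (abs_add_le _ _).trans ?_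
    rw [abs_neg, abs_mul, abs_mul]
  have t1 : |z.2.2 - V01| ≤ |z.2.2| + |V01| := abs_sub _ _
  have t2 : |z.2.2 - V02| ≤ |z.2.2| + |V02| := abs_sub _ _
  have u1 : |z.2.2 - V01| * |auxg π0 d1 z| ≤ (|z.2.2| + |V01|) * ε⁻¹ :=
    mul_le_mul t1 h1 (abs_nonneg _) (by linarith)
  have u2 : |z.2.2 - V02| * |auxg π0 d2 z| ≤ (|z.2.2| + |V02|) * ε⁻¹ :=
    mul_le_mul t2 h2 (abs_nonneg _) (by linarith)
  have : (|z.2.2| + |V01|) * ε⁻¹ + (|z.2.2| + |V02|) * ε⁻¹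
      ≤ ((2 + |V01| + |V02|) * ε⁻¹) * (|z.2.2| + 1) := by
    nlinarith [mul_nonneg (mul_nonneg hV1 hy) hεi.le, mul_nonneg (mul_nonneg hV2 hy) hεi.le,
      mul_pos hεi hεi]
  linarith

end MeasAux
/-- (Consistency of the empirical variance estimator with plugged-in values, known propensity
case.) If `E[Y²] < ∞` and `V̂_j^{(m)} → V₀(d_j)` in probability for `j = 1, 2`, then
`m^{−1} Σ_{i<m} (Û_{i,1} − Û_{i,2} − Ū₁ + Ū₂)²` converges in probability to
`Var(U₀⁽¹⁾ − U₀⁽²⁾)`. -/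
theorem stmt_10
    {Ω : Type*} [MeasurableSpace Ω] (P : Measure Ω) [IsProbabilityMeasure P]
    {p : ℕ}
    -- population variables
    (X : Ω → EuclideanSpace ℝ (Fin p)) (A : Ω → Bool) (Y : Ω → ℝ)
    (hX : Measurable X) (hA : Measurable A) (hY : Measurable Y)
    (hYint : Integrable Y P)
    -- true propensity score (known)
    (ε : ℝ) (hε : 0 < ε) (hε' : ε ≤ 1 / 2)
    (π0 : Bool → EuclideanSpace ℝ (Fin p) → ℝ)
    (hπ0meas : ∀ a, Measurable (π0 a)) (hπ0ε : ∀ a x, ε ≤ π0 a x)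
    -- the two decision rules
    (d1 d2 : EuclideanSpace ℝ (Fin p) → Bool) (hd1 : Measurable d1) (hd2 : Measurable d2)
    -- i.i.d. test data
    (Z : ℕ → Ω → EuclideanSpace ℝ (Fin p) × Bool × ℝ)
    (hZmeas : ∀ i, Measurable (Z i))
    (hZindep : iIndepFun Z P)
    (hZident : ∀ i, IdentDistrib (Z i) (fun ω => (X ω, A ω, Y ω)) P P)
    -- moment condition
    (hY2 : Integrable (fun ω => (Y ω) ^ 2) P)
    -- the values of `d₁` and `d₂`
    (V01 V02 : ℝ)
    (hV01 : V01 = ∫ ω, Y ω * (if A ω = d1 (X ω) then (1 : ℝ) else 0) / π0 (A ω) (X ω) ∂P)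
    (hV02 : V02 = ∫ ω, Y ω * (if A ω = d2 (X ω) then (1 : ℝ) else 0) / π0 (A ω) (X ω) ∂P)
    -- the plugged-in value estimates, consistent in probability
    (Vhat1 Vhat2 : ℕ → Ω → ℝ)
    (hVhat1meas : ∀ m, Measurable (Vhat1 m)) (hVhat2meas : ∀ m, Measurable (Vhat2 m))
    (hVhat1 : ∀ δ : ℝ, 0 < δ →
      Tendsto (fun m : ℕ => P {ω | δ < |Vhat1 m ω - V01|}) atTop (𝓝 0))
    (hVhat2 : ∀ δ : ℝ, 0 < δ →
      Tendsto (fun m : ℕ => P {ω | δ < |Vhat2 m ω - V02|}) atTop (𝓝 0))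
    -- the plugged-in influence-function values `Û_{i,j}`
    (Uhat1 Uhat2 : ℕ → ℕ → Ω → ℝ)
    (hUhat1 : ∀ m i ω, Uhat1 m i ω =
      ((Z i ω).2.2 - Vhat1 m ω) * (if (Z i ω).2.1 = d1 (Z i ω).1 then (1 : ℝ) else 0)
        / π0 (Z i ω).2.1 (Z i ω).1)
    (hUhat2 : ∀ m i ω, Uhat2 m i ω =
      ((Z i ω).2.2 - Vhat2 m ω) * (if (Z i ω).2.1 = d2 (Z i ω).1 then (1 : ℝ) else 0)
        / π0 (Z i ω).2.1 (Z i ω).1)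
    -- their empirical means `Ū_j`
    (Ubar1 Ubar2 : ℕ → Ω → ℝ)
    (hUbar1 : ∀ m ω, Ubar1 m ω = (m : ℝ)⁻¹ * ∑ i ∈ Finset.range m, Uhat1 m i ω)
    (hUbar2 : ∀ m ω, Ubar2 m ω = (m : ℝ)⁻¹ * ∑ i ∈ Finset.range m, Uhat2 m i ω)
    -- the population influence functions `U₀⁽ʲ⁾`
    (U01 U02 : Ω → ℝ)
    (hU01 : ∀ ω, U01 ω =
      (Y ω - V01) * (if A ω = d1 (X ω) then (1 : ℝ) else 0) / π0 (A ω) (X ω))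
    (hU02 : ∀ ω, U02 ω =
      (Y ω - V02) * (if A ω = d2 (X ω) then (1 : ℝ) else 0) / π0 (A ω) (X ω)) :
    -- conclusion: the empirical variance converges in probability to `Var(U₀⁽¹⁾ − U₀⁽²⁾)`
    ∀ δ : ℝ, 0 < δ →
      Tendsto (fun m : ℕ => P {ω | δ <
          |(m : ℝ)⁻¹ * ∑ i ∈ Finset.range m,
              (Uhat1 m i ω - Uhat2 m i ω - Ubar1 m ω + Ubar2 m ω) ^ 2
            - variance (fun ω => U01 ω - U02 ω) P|}) atTop (𝓝 0) := by
  classical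
  have hεi : (0:ℝ) < ε⁻¹ := by positivity
  have hεi2 : (2:ℝ) ≤ ε⁻¹ := by
    rw [show (2:ℝ) = ((1:ℝ)/2)⁻¹ by norm_num]
    gcongr
  set C : ℝ := (2 + |V01| + |V02|) * ε⁻¹ with hCdef
  set K : ℝ := C^2 + C*ε⁻¹ + ε⁻¹ + ε⁻¹^2 with hKdef
  have hC0 : 0 ≤ C := by rw [hCdef]; positivity
  have hK0 : 0 ≤ K := by rw [hKdef]; positivity
  have hKC2 : C^2 ≤ K := by rw [hKdef]; nlinarith [mul_nonneg hC0 hεi.le, sq_nonneg ε⁻¹]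
  have hKCε : C*ε⁻¹ ≤ K := by rw [hKdef]; nlinarith [sq_nonneg C, sq_nonneg ε⁻¹]
  have hKε : ε⁻¹ ≤ K := by
    rw [hKdef]; nlinarith [sq_nonneg C, mul_nonneg hC0 hεi.le, sq_nonneg ε⁻¹]
  have hKε2 : ε⁻¹^2 ≤ K := by rw [hKdef]; nlinarith [sq_nonneg C, mul_nonneg hC0 hεi.le]
  have hKC : C ≤ K := le_trans (by nlinarith) hKCε
  have hyb : ∀ z : EuclideanSpace ℝ (Fin p) × Bool × ℝ, (0:ℝ) ≤ |z.2.2| + 1 := fun z => by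
    positivity
  have hyb1 : ∀ z : EuclideanSpace ℝ (Fin p) × Bool × ℝ, (1:ℝ) ≤ (|z.2.2| + 1)^2 := fun z => by
    nlinarith [abs_nonneg z.2.2]
  have hybt : ∀ z : EuclideanSpace ℝ (Fin p) × Bool × ℝ,
      (|z.2.2| + 1) ≤ (|z.2.2| + 1)^2 := fun z => by nlinarith [abs_nonneg z.2.2]
  have hsb : ∀ z, |auxs π0 d1 d2 V01 V02 z| ≤ C * (|z.2.2| + 1) := fun z => by
    rw [hCdef]; exact auxs_abs_le hε hπ0ε z
  have hg1b : ∀ z, |auxg π0 d1 z| ≤ ε⁻¹ := auxg_abs_le hε hπ0ε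
  have hg2b : ∀ z, |auxg π0 d2 z| ≤ ε⁻¹ := auxg_abs_le hε hπ0ε
  -- the nine bounds
  have hb1 : ∀ z, |(auxs π0 d1 d2 V01 V02 z)^2| ≤ K * (|z.2.2| + 1)^2 := by
    intro z
    rw [abs_pow]
    calc |auxs π0 d1 d2 V01 V02 z|^2 ≤ (C * (|z.2.2| + 1))^2 :=
          pow_le_pow_left₀ (abs_nonneg _) (hsb z) 2
      _ = C^2 * (|z.2.2| + 1)^2 := by ring
      _ ≤ K * (|z.2.2| + 1)^2 := mul_le_mul_of_nonneg_right hKC2 (sq_nonneg _)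
  have hb2 : ∀ z, |(auxg π0 d1 z)^2| ≤ K * (|z.2.2| + 1)^2 := by
    intro z
    rw [abs_pow]
    calc |auxg π0 d1 z|^2 ≤ (ε⁻¹)^2 := pow_le_pow_left₀ (abs_nonneg _) (hg1b z) 2
      _ ≤ K := hKε2
      _ ≤ K * (|z.2.2| + 1)^2 := le_mul_of_one_le_right hK0 (hyb1 z)
  have hb3 : ∀ z, |(auxg π0 d2 z)^2| ≤ K * (|z.2.2| + 1)^2 := by
    intro z
    rw [abs_pow]
    calc |auxg π0 d2 z|^2 ≤ (ε⁻¹)^2 := pow_le_pow_left₀ (abs_nonneg _) (hg2b z) 2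
      _ ≤ K := hKε2
      _ ≤ K * (|z.2.2| + 1)^2 := le_mul_of_one_le_right hK0 (hyb1 z)
  have hb4 : ∀ z, |auxs π0 d1 d2 V01 V02 z * auxg π0 d1 z| ≤ K * (|z.2.2| + 1)^2 := by
    intro z
    rw [abs_mul]
    calc |auxs π0 d1 d2 V01 V02 z| * |auxg π0 d1 z| ≤ (C * (|z.2.2| + 1)) * ε⁻¹ :=
          mul_le_mul (hsb z) (hg1b z) (abs_nonneg _) (mul_nonneg hC0 (hyb z))
      _ = (C * ε⁻¹) * (|z.2.2| + 1) := by ring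
      _ ≤ K * (|z.2.2| + 1) := mul_le_mul_of_nonneg_right hKCε (hyb z)
      _ ≤ K * (|z.2.2| + 1)^2 := mul_le_mul_of_nonneg_left (hybt z) hK0
  have hb5 : ∀ z, |auxs π0 d1 d2 V01 V02 z * auxg π0 d2 z| ≤ K * (|z.2.2| + 1)^2 := by
    intro z
    rw [abs_mul]
    calc |auxs π0 d1 d2 V01 V02 z| * |auxg π0 d2 z| ≤ (C * (|z.2.2| + 1)) * ε⁻¹ :=
          mul_le_mul (hsb z) (hg2b z) (abs_nonneg _) (mul_nonneg hC0 (hyb z))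
      _ = (C * ε⁻¹) * (|z.2.2| + 1) := by ring
      _ ≤ K * (|z.2.2| + 1) := mul_le_mul_of_nonneg_right hKCε (hyb z)
      _ ≤ K * (|z.2.2| + 1)^2 := mul_le_mul_of_nonneg_left (hybt z) hK0
  have hb6 : ∀ z, |auxg π0 d1 z * auxg π0 d2 z| ≤ K * (|z.2.2| + 1)^2 := by
    intro z
    rw [abs_mul]
    calc |auxg π0 d1 z| * |auxg π0 d2 z| ≤ ε⁻¹ * ε⁻¹ :=
          mul_le_mul (hg1b z) (hg2b z) (abs_nonneg _) hεi.le
      _ = ε⁻¹^2 := by ring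
      _ ≤ K := hKε2
      _ ≤ K * (|z.2.2| + 1)^2 := le_mul_of_one_le_right hK0 (hyb1 z)
  have hb7 : ∀ z, |auxs π0 d1 d2 V01 V02 z| ≤ K * (|z.2.2| + 1)^2 := by
    intro z
    calc |auxs π0 d1 d2 V01 V02 z| ≤ C * (|z.2.2| + 1) := hsb z
      _ ≤ K * (|z.2.2| + 1) := mul_le_mul_of_nonneg_right hKC (hyb z)
      _ ≤ K * (|z.2.2| + 1)^2 := mul_le_mul_of_nonneg_left (hybt z) hK0
  have hb8 : ∀ z, |auxg π0 d1 z| ≤ K * (|z.2.2| + 1)^2 := by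
    intro z
    calc |auxg π0 d1 z| ≤ ε⁻¹ := hg1b z
      _ ≤ K := hKε
      _ ≤ K * (|z.2.2| + 1)^2 := le_mul_of_one_le_right hK0 (hyb1 z)
  have hb9 : ∀ z, |auxg π0 d2 z| ≤ K * (|z.2.2| + 1)^2 := by
    intro z
    calc |auxg π0 d2 z| ≤ ε⁻¹ := hg2b z
      _ ≤ K := hKε
      _ ≤ K * (|z.2.2| + 1)^2 := le_mul_of_one_le_right hK0 (hyb1 z)
  -- measurability
  have hmeasXAY : Measurable (fun ω => (X ω, A ω, Y ω)) := hX.prodMk (hA.prodMk hY)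
  have hsmeas : Measurable (auxs π0 d1 d2 V01 V02) := auxs_measurable hπ0meas hd1 hd2
  have hg1meas : Measurable (auxg π0 d1) := auxg_measurable hπ0meas hd1
  have hg2meas : Measurable (auxg π0 d2) := auxg_measurable hπ0meas hd2
  -- integrable majorant machinery
  have hmaj : Integrable (fun ω => K * (|Y ω| + 1)^2) P := by
    have h1 : Integrable (fun ω => Y ω^2 + (2*|Y ω| + 1)) P :=
      hY2.add ((hYint.abs.const_mul 2).add (integrable_const 1))
    have h2 : (fun ω => K * (|Y ω| + 1)^2) = fun ω => K * (Y ω^2 + (2*|Y ω| + 1)) := by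
      funext ω
      have h3 : (|Y ω| + 1)^2 = Y ω^2 + (2*|Y ω| + 1) := by
        linear_combination sq_abs (Y ω)
      rw [h3]
    rw [h2]
    exact h1.const_mul K
  have hIntOf : ∀ f : EuclideanSpace ℝ (Fin p) × Bool × ℝ → ℝ, Measurable f →
      (∀ z, |f z| ≤ K * (|z.2.2| + 1)^2) → Integrable (fun ω => f (X ω, A ω, Y ω)) P := by
    intro f hfm hfb
    refine hmaj.mono ((hfm.comp hmeasXAY).aestronglyMeasurable) (ae_of_all _ fun ω => ?_)
    rw [Real.norm_eq_abs, Real.norm_eq_abs]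
    exact le_trans (hfb (X ω, A ω, Y ω)) (le_abs_self _)
  -- law of large numbers machinery
  have hSLLN : ∀ f : EuclideanSpace ℝ (Fin p) × Bool × ℝ → ℝ, Measurable f →
      (∀ z, |f z| ≤ K * (|z.2.2| + 1)^2) →
      TendstoP P (fun m ω => (m:ℝ)⁻¹ * ∑ i ∈ Finset.range m, f (Z i ω))
        (∫ ω, f (X ω, A ω, Y ω) ∂P) := by
    intro f hfm hfb
    have hint : Integrable (fun ω => f (X ω, A ω, Y ω)) P := hIntOf f hfm hfb
    have hident0 : ∀ i, IdentDistrib (fun ω => f (Z i ω)) (fun ω => f (Z 0 ω)) P P :=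
      fun i => ((hZident i).trans (hZident 0).symm).comp hfm
    have hint0 : Integrable (fun ω => f (Z 0 ω)) P :=
      (((hZident 0).comp hfm).integrable_iff).2 hint
    have hindep : Pairwise (Function.onFun (IndepFun · · P) fun i ω => f (Z i ω)) :=
      fun i j hij => (hZindep.indepFun hij).comp hfm hfm
    have hae := strong_law_ae_real (fun i ω => f (Z i ω)) hint0 hindep hident0
    have hieq : ∫ ω, f (Z 0 ω) ∂P = ∫ ω, f (X ω, A ω, Y ω) ∂P :=
      ((hZident 0).comp hfm).integral_eq
    refine tendstoP_of_ae (fun m => ?_) ?_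
    · exact ((Finset.measurable_sum (Finset.range m)
        (fun i _ => hfm.comp (hZmeas i))).const_mul ((m:ℝ)⁻¹)).aestronglyMeasurable
    · filter_upwards [hae] with ω hω
      rw [hieq] at hω
      simpa [div_eq_inv_mul] using hω
  -- the nine empirical means
  have hM1 : TendstoP P
      (fun m ω => (m:ℝ)⁻¹ * ∑ i ∈ Finset.range m, (auxs π0 d1 d2 V01 V02 (Z i ω))^2)
      (∫ ω, (auxs π0 d1 d2 V01 V02 (X ω, A ω, Y ω))^2 ∂P) :=
    hSLLN (fun z => (auxs π0 d1 d2 V01 V02 z)^2) (hsmeas.pow_const 2) hb1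
  have hM2 : TendstoP P
      (fun m ω => (m:ℝ)⁻¹ * ∑ i ∈ Finset.range m, (auxg π0 d1 (Z i ω))^2)
      (∫ ω, (auxg π0 d1 (X ω, A ω, Y ω))^2 ∂P) :=
    hSLLN (fun z => (auxg π0 d1 z)^2) (hg1meas.pow_const 2) hb2
  have hM3 : TendstoP P
      (fun m ω => (m:ℝ)⁻¹ * ∑ i ∈ Finset.range m, (auxg π0 d2 (Z i ω))^2)
      (∫ ω, (auxg π0 d2 (X ω, A ω, Y ω))^2 ∂P) :=
    hSLLN (fun z => (auxg π0 d2 z)^2) (hg2meas.pow_const 2) hb3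
  have hM4 : TendstoP P
      (fun m ω => (m:ℝ)⁻¹ * ∑ i ∈ Finset.range m,
        auxs π0 d1 d2 V01 V02 (Z i ω) * auxg π0 d1 (Z i ω))
      (∫ ω, auxs π0 d1 d2 V01 V02 (X ω, A ω, Y ω) * auxg π0 d1 (X ω, A ω, Y ω) ∂P) :=
    hSLLN (fun z => auxs π0 d1 d2 V01 V02 z * auxg π0 d1 z) (hsmeas.mul hg1meas) hb4
  have hM5 : TendstoP P
      (fun m ω => (m:ℝ)⁻¹ * ∑ i ∈ Finset.range m,
        auxs π0 d1 d2 V01 V02 (Z i ω) * auxg π0 d2 (Z i ω))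
      (∫ ω, auxs π0 d1 d2 V01 V02 (X ω, A ω, Y ω) * auxg π0 d2 (X ω, A ω, Y ω) ∂P) :=
    hSLLN (fun z => auxs π0 d1 d2 V01 V02 z * auxg π0 d2 z) (hsmeas.mul hg2meas) hb5
  have hM6 : TendstoP P
      (fun m ω => (m:ℝ)⁻¹ * ∑ i ∈ Finset.range m, auxg π0 d1 (Z i ω) * auxg π0 d2 (Z i ω))
      (∫ ω, auxg π0 d1 (X ω, A ω, Y ω) * auxg π0 d2 (X ω, A ω, Y ω) ∂P) :=
    hSLLN (fun z => auxg π0 d1 z * auxg π0 d2 z) (hg1meas.mul hg2meas) hb6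
  have hM7 : TendstoP P
      (fun m ω => (m:ℝ)⁻¹ * ∑ i ∈ Finset.range m, auxs π0 d1 d2 V01 V02 (Z i ω))
      (∫ ω, auxs π0 d1 d2 V01 V02 (X ω, A ω, Y ω) ∂P) :=
    hSLLN (auxs π0 d1 d2 V01 V02) hsmeas hb7
  have hM8 : TendstoP P
      (fun m ω => (m:ℝ)⁻¹ * ∑ i ∈ Finset.range m, auxg π0 d1 (Z i ω))
      (∫ ω, auxg π0 d1 (X ω, A ω, Y ω) ∂P) :=
    hSLLN (auxg π0 d1) hg1meas hb8
  have hM9 : TendstoP P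
      (fun m ω => (m:ℝ)⁻¹ * ∑ i ∈ Finset.range m, auxg π0 d2 (Z i ω))
      (∫ ω, auxg π0 d2 (X ω, A ω, Y ω) ∂P) :=
    hSLLN (auxg π0 d2) hg2meas hb9
  -- plug-in estimates converge to 0
  have hc1 : TendstoP P (fun m ω => Vhat1 m ω - V01) 0 := by
    intro ε' hε'0
    refine tendsto_of_tendsto_of_tendsto_of_le_of_le (g := fun _ => (0:ℝ≥0∞))
      (h := fun m => P {ω | ε'/2 < |Vhat1 m ω - V01|}) tendsto_const_nhds
      (hVhat1 (ε'/2) (by linarith)) (fun m => zero_le) (fun m => measure_mono ?_)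
    intro ω hω
    simp only [Set.mem_setOf_eq, sub_zero] at hω ⊢
    linarith
  have hc2 : TendstoP P (fun m ω => Vhat2 m ω - V02) 0 := by
    intro ε' hε'0
    refine tendsto_of_tendsto_of_tendsto_of_le_of_le (g := fun _ => (0:ℝ≥0∞))
      (h := fun m => P {ω | ε'/2 < |Vhat2 m ω - V02|}) tendsto_const_nhds
      (hVhat2 (ε'/2) (by linarith)) (fun m => zero_le) (fun m => measure_mono ?_)
    intro ω hω
    simp only [Set.mem_setOf_eq, sub_zero] at hω ⊢
    linarith
  -- algebraic identity for the statistic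
  have hD : ∀ m i ω, Uhat1 m i ω - Uhat2 m i ω
      = auxs π0 d1 d2 V01 V02 (Z i ω) - (Vhat1 m ω - V01) * auxg π0 d1 (Z i ω)
        + (Vhat2 m ω - V02) * auxg π0 d2 (Z i ω) := by
    intro m i ω
    rw [hUhat1, hUhat2]
    simp only [auxs, auxg]
    ring
  have hUbar : ∀ (m : ℕ) (ω : Ω), Ubar1 m ω - Ubar2 m ω
      = (m:ℝ)⁻¹ * ∑ j ∈ Finset.range m, (auxs π0 d1 d2 V01 V02 (Z j ω)
          - (Vhat1 m ω - V01) * auxg π0 d1 (Z j ω)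
          + (Vhat2 m ω - V02) * auxg π0 d2 (Z j ω)) := by
    intro m ω
    rw [hUbar1, hUbar2, ← mul_sub, ← Finset.sum_sub_distrib]
    congr 1
    exact Finset.sum_congr rfl fun i _ => hD m i ω
  have hstat_eq : ∀ (m : ℕ) (ω : Ω),
      (m:ℝ)⁻¹ * ∑ i ∈ Finset.range m,
          (Uhat1 m i ω - Uhat2 m i ω - Ubar1 m ω + Ubar2 m ω)^2
      = ((m:ℝ)⁻¹ * ∑ i ∈ Finset.range m, (auxs π0 d1 d2 V01 V02 (Z i ω))^2)
        - 2*(Vhat1 m ω - V01)*((m:ℝ)⁻¹ * ∑ i ∈ Finset.range m,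
            auxs π0 d1 d2 V01 V02 (Z i ω) * auxg π0 d1 (Z i ω))
        + 2*(Vhat2 m ω - V02)*((m:ℝ)⁻¹ * ∑ i ∈ Finset.range m,
            auxs π0 d1 d2 V01 V02 (Z i ω) * auxg π0 d2 (Z i ω))
        + (Vhat1 m ω - V01)^2*((m:ℝ)⁻¹ * ∑ i ∈ Finset.range m, (auxg π0 d1 (Z i ω))^2)
        + (Vhat2 m ω - V02)^2*((m:ℝ)⁻¹ * ∑ i ∈ Finset.range m, (auxg π0 d2 (Z i ω))^2)
        - 2*((Vhat1 m ω - V01)*(Vhat2 m ω - V02))*((m:ℝ)⁻¹ * ∑ i ∈ Finset.range m,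
            auxg π0 d1 (Z i ω) * auxg π0 d2 (Z i ω))
        - (((m:ℝ)⁻¹ * ∑ i ∈ Finset.range m, auxs π0 d1 d2 V01 V02 (Z i ω))
            - (Vhat1 m ω - V01)*((m:ℝ)⁻¹ * ∑ i ∈ Finset.range m, auxg π0 d1 (Z i ω))
            + (Vhat2 m ω - V02)*((m:ℝ)⁻¹ * ∑ i ∈ Finset.range m, auxg π0 d2 (Z i ω)))^2 := by
    intro m ω
    have h1 : ∀ i ∈ Finset.range m,
        (Uhat1 m i ω - Uhat2 m i ω - Ubar1 m ω + Ubar2 m ω)^2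
        = ((auxs π0 d1 d2 V01 V02 (Z i ω) - (Vhat1 m ω - V01) * auxg π0 d1 (Z i ω)
            + (Vhat2 m ω - V02) * auxg π0 d2 (Z i ω))
          - (m:ℝ)⁻¹ * ∑ j ∈ Finset.range m, (auxs π0 d1 d2 V01 V02 (Z j ω)
            - (Vhat1 m ω - V01) * auxg π0 d1 (Z j ω)
            + (Vhat2 m ω - V02) * auxg π0 d2 (Z j ω)))^2 := by
      intro i _
      rw [show Uhat1 m i ω - Uhat2 m i ω - Ubar1 m ω + Ubar2 m ω
          = (Uhat1 m i ω - Uhat2 m i ω) - (Ubar1 m ω - Ubar2 m ω) by ring,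
        hD m i ω, hUbar m ω]
    rw [Finset.sum_congr rfl h1]
    exact stat_eq_aux m (Vhat1 m ω - V01) (Vhat2 m ω - V02)
      (fun i => auxs π0 d1 d2 V01 V02 (Z i ω)) (fun i => auxg π0 d1 (Z i ω))
      (fun i => auxg π0 d2 (Z i ω))
  -- identify the variance
  have hfun : (fun ω => U01 ω - U02 ω)
      = (fun ω => auxs π0 d1 d2 V01 V02 (X ω, A ω, Y ω)) := by
    funext ω
    rw [hU01 ω, hU02 ω]
    simp only [auxs, auxg]
    ring
  have hintsq : Integrable (fun ω => (auxs π0 d1 d2 V01 V02 (X ω, A ω, Y ω))^2) P :=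
    hIntOf (fun z => (auxs π0 d1 d2 V01 V02 z)^2) (hsmeas.pow_const 2) hb1
  have hmem : MemLp (fun ω => auxs π0 d1 d2 V01 V02 (X ω, A ω, Y ω)) 2 P :=
    (memLp_two_iff_integrable_sq (hsmeas.comp hmeasXAY).aestronglyMeasurable).2 hintsq
  have hvar : variance (fun ω => U01 ω - U02 ω) P
      = (∫ ω, (auxs π0 d1 d2 V01 V02 (X ω, A ω, Y ω))^2 ∂P)
        - (∫ ω, auxs π0 d1 d2 V01 V02 (X ω, A ω, Y ω) ∂P)^2 := by
    rw [hfun, variance_eq_sub hmem]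
    rfl
  -- assemble the convergence in probability of the statistic
  have hGlim := (((((hM1.sub (((TendstoP.const 2).mul hc1).mul hM4)).add
      (((TendstoP.const 2).mul hc2).mul hM5)).add (hc1.sq.mul hM2)).add
      (hc2.sq.mul hM3)).sub (((TendstoP.const 2).mul (hc1.mul hc2)).mul hM6)).sub
      (TendstoP.sq ((hM7.sub (hc1.mul hM8)).add (hc2.mul hM9)))
  have hstatP : TendstoP P (fun m ω => (m:ℝ)⁻¹ * ∑ i ∈ Finset.range m,
      (Uhat1 m i ω - Uhat2 m i ω - Ubar1 m ω + Ubar2 m ω)^2)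
      (variance (fun ω => U01 ω - U02 ω) P) :=
    TendstoP.congr_lim
      (tendstoP_congr (fun m ω => by simp only [hstat_eq m ω]; try ring) hGlim)
      (by rw [hvar]; ring)
  -- conclude
  intro δ hδ
  refine tendsto_of_tendsto_of_tendsto_of_le_of_le (g := fun _ => (0:ℝ≥0∞))
    (h := fun m : ℕ => P {ω | δ ≤ |(m:ℝ)⁻¹ * ∑ i ∈ Finset.range m,
        (Uhat1 m i ω - Uhat2 m i ω - Ubar1 m ω + Ubar2 m ω)^2
        - variance (fun ω => U01 ω - U02 ω) P|}) tendsto_const_nhds (hstatP δ hδ)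
    (fun m => zero_le) (fun m => measure_mono ?_)
  intro ω hω
  simp only [Set.mem_setOf_eq] at hω ⊢
  exact le_of_lt hω
end

section
/- (Plug-in law of large numbers for the Hájek denominator.) Suppose sup_{a ∈ {0,1}, x ∈ ℝ^p} |π(a|x, θ̂_{n_m}) − π₀(a|x)| → 0 in probability as m → ∞, and that π(a|x, θ̂_{n_m}) ≥ ε and π₀(a|x) ≥ ε for all a, x almost surely. Then m^{−1} Σ_{i=1}^m 1{A_i = d(X_i)} / π(A_i|X_i, θ̂_{n_m}) converges to 1 in probability as m → ∞. -/
open MeasureTheory ProbabilityTheory Filter Topology Real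
open scoped ENNReal

lemma aux_term (ε η c b1 b2 : ℝ) (hε : 0 < ε) (hc0 : 0 ≤ c) (hc1 : c ≤ 1)
    (hb1 : ε ≤ b1) (hb2 : ε ≤ b2) (hη : |b1 - b2| ≤ η) :
    |c / b1 - c / b2| ≤ η / (ε * ε) := by
  have hb1' : 0 < b1 := hε.trans_le hb1
  have hb2' : 0 < b2 := hε.trans_le hb2
  have h1 : c / b1 - c / b2 = c * (b2 - b1) / (b1 * b2) := by
    field_simp
  rw [h1, abs_div, abs_mul, abs_of_pos (mul_pos hb1' hb2')]
  have h2 : |c| * |b2 - b1| ≤ η := by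
    rw [abs_of_nonneg hc0, abs_sub_comm]
    calc c * |b1 - b2| ≤ 1 * |b1 - b2| :=
          mul_le_mul_of_nonneg_right hc1 (abs_nonneg _)
      _ = |b1 - b2| := one_mul _
      _ ≤ η := hη
  exact div_le_div₀ ((mul_nonneg (abs_nonneg _) (abs_nonneg _)).trans h2) h2
    (mul_pos hε hε) (mul_le_mul hb1 hb2 hε.le hb1'.le)


/-- (Plug-in law of large numbers for the Hájek denominator.) If
`sup_{a,x} |π(a|x, θ̂_{n_m}) − π₀(a|x)| → 0` in probability and the propensities are bounded
below by `ε` (the estimated ones almost surely), then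
`m^{−1} Σ_{i<m} 1{A_i = d(X_i)} / π(A_i|X_i, θ̂_{n_m}) → 1` in probability. -/
theorem stmt_12
    {Ω : Type*} [MeasurableSpace Ω] (P : Measure Ω) [IsProbabilityMeasure P]
    {p : ℕ}
    -- population variables
    (X : Ω → EuclideanSpace ℝ (Fin p)) (A : Ω → Bool) (Y : Ω → ℝ)
    (hX : Measurable X) (hA : Measurable A) (hY : Measurable Y)
    (hYint : Integrable Y P)
    -- true propensity score
    (ε : ℝ) (hε : 0 < ε) (hε' : ε ≤ 1 / 2)
    (π0 : Bool → EuclideanSpace ℝ (Fin p) → ℝ)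
    (hπ0meas : ∀ a, Measurable (π0 a)) (hπ0ε : ∀ a x, ε ≤ π0 a x)
    (hπ0cond : ∀ a : Bool,
      (fun ω => π0 a (X ω)) =ᵐ[P]
        P[fun ω => (if A ω = a then (1 : ℝ) else 0) | MeasurableSpace.comap X inferInstance])
    -- decision rule
    (d : EuclideanSpace ℝ (Fin p) → Bool) (hd : Measurable d)
    -- i.i.d. test data
    (Z : ℕ → Ω → EuclideanSpace ℝ (Fin p) × Bool × ℝ)
    (hZmeas : ∀ i, Measurable (Z i))
    (hZindep : iIndepFun Z P)
    (hZident : ∀ i, IdentDistrib (Z i) (fun ω => (X ω, A ω, Y ω)) P P)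
    -- parametric propensity model
    (θ0 : EuclideanSpace ℝ (Fin p))
    (πm : Bool → EuclideanSpace ℝ (Fin p) → EuclideanSpace ℝ (Fin p) → ℝ)
    (hπmmeas : ∀ a, Measurable
      (fun q : EuclideanSpace ℝ (Fin p) × EuclideanSpace ℝ (Fin p) => πm a q.1 q.2))
    (hπmθ0 : ∀ a x, πm a x θ0 = π0 a x)
    -- training-set estimator, independent of the test data
    (θhat : ℕ → Ω → EuclideanSpace ℝ (Fin p)) (hθmeas : ∀ n, Measurable (θhat n))
    (nm : ℕ → ℕ)
    (hθindep : ∀ m : ℕ, IndepFun (θhat (nm m)) (fun ω => fun i => Z i ω) P)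
    -- uniform consistency of the plugged-in propensity
    (hsup : ∀ δ : ℝ, 0 < δ →
      Tendsto (fun m : ℕ =>
        P {ω | ∃ a x, δ < |πm a x (θhat (nm m) ω) - π0 a x|}) atTop (𝓝 0))
    -- lower bounds
    (hπhatε : ∀ m : ℕ, ∀ᵐ ω ∂P, ∀ a x, ε ≤ πm a x (θhat (nm m) ω)) :
    -- conclusion: the Hájek denominator converges to `1` in probability
    ∀ δ : ℝ, 0 < δ →
      Tendsto (fun m : ℕ => P {ω | δ <
          |(m : ℝ)⁻¹ * ∑ i ∈ Finset.range m,
              (if (Z i ω).2.1 = d (Z i ω).1 then (1 : ℝ) else 0)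
                / πm (Z i ω).2.1 (Z i ω).1 (θhat (nm m) ω)
            - 1|}) atTop (𝓝 0) := by
  classical
  -- the oracle function
  set f0 : EuclideanSpace ℝ (Fin p) × Bool × ℝ → ℝ :=
    fun z => (if z.2.1 = d z.1 then (1 : ℝ) else 0) / π0 z.2.1 z.1 with hf0def
  have hb : Measurable fun z : EuclideanSpace ℝ (Fin p) × Bool × ℝ => z.2.1 :=
    measurable_snd.fst
  have hg0 : Measurable fun z : EuclideanSpace ℝ (Fin p) × Bool × ℝ => π0 z.2.1 z.1 := by
    have heq : (fun z : EuclideanSpace ℝ (Fin p) × Bool × ℝ => π0 z.2.1 z.1)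
        = fun z => if z.2.1 = true then π0 true z.1 else π0 false z.1 := by
      funext z; cases z.2.1 <;> simp
    rw [heq]
    exact Measurable.ite (hb (measurableSet_singleton true))
      ((hπ0meas true).comp measurable_fst) ((hπ0meas false).comp measurable_fst)
  have hindset : MeasurableSet {z : EuclideanSpace ℝ (Fin p) × Bool × ℝ | z.2.1 = d z.1} :=
    measurableSet_eq_fun hb (hd.comp measurable_fst)
  have hf0 : Measurable f0 :=
    (Measurable.ite hindset measurable_const measurable_const).div hg0
  have hf0bdd : ∀ z, |f0 z| ≤ 1 / ε := by
    intro z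
    have hbz := hπ0ε z.2.1 z.1
    have hbz' : 0 < π0 z.2.1 z.1 := hε.trans_le hbz
    have hc0 : (0 : ℝ) ≤ (if z.2.1 = d z.1 then (1:ℝ) else 0) := by positivity
    have hc1 : (if z.2.1 = d z.1 then (1:ℝ) else 0) ≤ 1 := by split <;> norm_num
    rw [hf0def]
    simp only
    rw [abs_of_nonneg (div_nonneg hc0 hbz'.le)]
    exact div_le_div₀ zero_le_one hc1 hε hbz
  -- integrability of bounded measurable functions
  have key_int : ∀ (g : Ω → ℝ) (C : ℝ), Measurable g → (∀ ω, |g ω| ≤ C) →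
      Integrable g P := by
    intro g C hg hC
    exact (integrable_const C).mono' hg.aestronglyMeasurable
      (Eventually.of_forall fun ω => by simpa using hC ω)
  -- the oracle random variables
  set W : ℕ → Ω → ℝ := fun i ω => f0 (Z i ω) with hWdef
  have hWmeas : ∀ i, Measurable (W i) := fun i => hf0.comp (hZmeas i)
  have hWint : Integrable (W 0) P :=
    key_int _ (1/ε) (hWmeas 0) fun ω => hf0bdd _
  have hWindep : Pairwise (Function.onFun (IndepFun · · P) W) := fun i j hij =>
    (hZindep.indepFun hij).comp hf0 hf0
  have hWident : ∀ i, IdentDistrib (W i) (W 0) P P := fun i =>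
    ((hZident i).trans (hZident 0).symm).comp hf0
  -- auxiliary measurability / integrability for the conditional-expectation computation
  have hm' := hX.comap_le
  have hXm' : Measurable[MeasurableSpace.comap X inferInstance] X := fun s hs => ⟨s, hs, rfl⟩
  have hgmeas : ∀ a : Bool, Measurable fun x : EuclideanSpace ℝ (Fin p) =>
      (if d x = a then (1:ℝ) else 0) / π0 a x := fun a =>
    (Measurable.ite (hd (measurableSet_singleton a)) measurable_const measurable_const).div
      (hπ0meas a)
  have hχmeas : ∀ a : Bool, Measurable fun ω => (if A ω = a then (1:ℝ) else 0) := fun a =>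
    Measurable.ite (hA (measurableSet_singleton a)) measurable_const measurable_const
  have hhbdd : ∀ (a : Bool) (x), |(if d x = a then (1:ℝ) else 0) / π0 a x| ≤ 1/ε := by
    intro a x
    have hbz := hπ0ε a x
    have hc0 : (0:ℝ) ≤ (if d x = a then (1:ℝ) else 0) := by positivity
    have hc1 : (if d x = a then (1:ℝ) else 0) ≤ 1 := by split <;> norm_num
    rw [abs_of_nonneg (div_nonneg hc0 (hε.trans_le hbz).le)]
    exact div_le_div₀ zero_le_one hc1 hε hbz
  have hχbdd : ∀ (a : Bool) (ω : Ω), |(if A ω = a then (1:ℝ) else 0)| ≤ 1 := by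
    intro a ω; split <;> norm_num
  have hmulint : ∀ a : Bool, Integrable (fun ω =>
      ((if d (X ω) = a then (1:ℝ) else 0) / π0 a (X ω))
        * (if A ω = a then (1:ℝ) else 0)) P := by
    intro a
    refine key_int _ (1/ε) (((hgmeas a).comp hX).mul (hχmeas a)) fun ω => ?_
    rw [abs_mul]
    calc _ ≤ (1/ε) * 1 := mul_le_mul (hhbdd a (X ω)) (hχbdd a ω) (abs_nonneg _) (by positivity)
      _ = 1/ε := mul_one _
  have hindint : ∀ a : Bool,
      Integrable (fun ω => (if d (X ω) = a then (1:ℝ) else 0)) P := by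
    intro a
    refine key_int _ 1 ?_ fun ω => by split <;> norm_num
    exact Measurable.ite ((hd.comp hX) (measurableSet_singleton a)) measurable_const
      measurable_const
  -- the key conditional-expectation identity
  have key : ∀ a : Bool,
      (∫ ω, ((if d (X ω) = a then (1:ℝ) else 0) / π0 a (X ω))
          * (if A ω = a then (1:ℝ) else 0) ∂P)
        = ∫ ω, (if d (X ω) = a then (1:ℝ) else 0) ∂P := by
    intro a
    set h : Ω → ℝ := fun ω => (if d (X ω) = a then (1:ℝ) else 0) / π0 a (X ω) with hhdef
    set χ : Ω → ℝ := fun ω => if A ω = a then (1:ℝ) else 0 with hχdef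
    have hsm : StronglyMeasurable[MeasurableSpace.comap X inferInstance] h :=
      ((hgmeas a).comp hXm').stronglyMeasurable
    have hχint : Integrable χ P := key_int _ 1 (hχmeas a) (hχbdd a)
    have hmulint' : Integrable (h * χ) P := hmulint a
    have hpull : P[h * χ | MeasurableSpace.comap X inferInstance]
        =ᵐ[P] h * P[χ | MeasurableSpace.comap X inferInstance] :=
      condExp_mul_of_stronglyMeasurable_left hsm hmulint' hχint
    have hcond : h * (fun ω => π0 a (X ω))
        =ᵐ[P] h * P[χ | MeasurableSpace.comap X inferInstance] :=
      EventuallyEq.mul EventuallyEq.rfl (hπ0cond a)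
    calc (∫ ω, h ω * χ ω ∂P) = ∫ ω, (h * χ) ω ∂P := rfl
      _ = ∫ ω, (P[h * χ | MeasurableSpace.comap X inferInstance]) ω ∂P :=
          (integral_condExp hm').symm
      _ = ∫ ω, (h * P[χ | MeasurableSpace.comap X inferInstance]) ω ∂P :=
          integral_congr_ae hpull
      _ = ∫ ω, (h ω * π0 a (X ω)) ∂P := (integral_congr_ae hcond).symm
      _ = ∫ ω, (if d (X ω) = a then (1:ℝ) else 0) ∂P := by
        refine integral_congr_ae (Eventually.of_forall fun ω => ?_)
        have hne : π0 a (X ω) ≠ 0 := (hε.trans_le (hπ0ε a (X ω))).ne'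
        rw [hhdef]
        simp only
        rw [div_mul_cancel₀ _ hne]
  -- E of the oracle at the population variables equals 1
  have hEF : (∫ ω, f0 (X ω, A ω, Y ω) ∂P) = 1 := by
    have hpt : ∀ ω : Ω, f0 (X ω, A ω, Y ω)
        = ((if d (X ω) = true then (1:ℝ) else 0) / π0 true (X ω))
            * (if A ω = true then (1:ℝ) else 0)
          + ((if d (X ω) = false then (1:ℝ) else 0) / π0 false (X ω))
            * (if A ω = false then (1:ℝ) else 0) := by
      intro ω
      rw [hf0def]
      cases hA' : A ω <;> cases hD : d (X ω) <;> simp [hA', hD]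
    calc (∫ ω, f0 (X ω, A ω, Y ω) ∂P)
        = ∫ ω, (((if d (X ω) = true then (1:ℝ) else 0) / π0 true (X ω))
            * (if A ω = true then (1:ℝ) else 0)
          + ((if d (X ω) = false then (1:ℝ) else 0) / π0 false (X ω))
            * (if A ω = false then (1:ℝ) else 0)) ∂P :=
          integral_congr_ae (Eventually.of_forall hpt)
      _ = (∫ ω, ((if d (X ω) = true then (1:ℝ) else 0) / π0 true (X ω))
            * (if A ω = true then (1:ℝ) else 0) ∂P)
          + ∫ ω, ((if d (X ω) = false then (1:ℝ) else 0) / π0 false (X ω))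
            * (if A ω = false then (1:ℝ) else 0) ∂P :=
          integral_add (hmulint true) (hmulint false)
      _ = (∫ ω, (if d (X ω) = true then (1:ℝ) else 0) ∂P)
          + ∫ ω, (if d (X ω) = false then (1:ℝ) else 0) ∂P := by
          rw [key true, key false]
      _ = ∫ ω, ((if d (X ω) = true then (1:ℝ) else 0)
          + (if d (X ω) = false then (1:ℝ) else 0)) ∂P :=
          (integral_add (hindint true) (hindint false)).symm
      _ = ∫ _ω, (1:ℝ) ∂P := by
          refine integral_congr_ae (Eventually.of_forall fun ω => ?_)
          cases hD : d (X ω) <;> simp [hD]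
      _ = 1 := by simp
  have hEW : (∫ ω, W 0 ω ∂P) = 1 := by
    rw [← hEF]
    exact ((hZident 0).comp hf0).integral_eq
  -- strong law of large numbers for the oracle sums
  have hslln : ∀ᵐ ω ∂P,
      Tendsto (fun n : ℕ => (∑ i ∈ Finset.range n, W i ω) / n) atTop (𝓝 1) := by
    have := strong_law_ae_real W hWint hWindep hWident
    rwa [hEW] at this
  have hTIM : TendstoInMeasure P
      (fun (n : ℕ) ω => (∑ i ∈ Finset.range n, W i ω) / n) atTop (fun _ => (1:ℝ)) :=
    tendstoInMeasure_of_tendsto_ae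
      (fun n => ((Finset.measurable_sum _ fun i _ => hWmeas i).div_const _).aestronglyMeasurable)
      hslln
  -- conclusion
  intro δ hδ
  have hδ2 : (0:ℝ) < δ/2 := by positivity
  have hηpos : (0:ℝ) < δ/2 * (ε*ε) := by positivity
  have hB1 := tendstoInMeasure_iff_dist.mp hTIM (δ/2) hδ2
  have hB2 := hsup (δ/2 * (ε*ε)) hηpos
  have hB3 : ∀ m : ℕ, P {ω | ¬ ∀ a x, ε ≤ πm a x (θhat (nm m) ω)} = 0 := by
    intro m
    have := hπhatε m
    rwa [ae_iff] at this
  have hup := hB1.add hB2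
  rw [add_zero] at hup
  refine tendsto_of_tendsto_of_tendsto_of_le_of_le tendsto_const_nhds
    hup (fun m => zero_le) (fun m => ?_)
  -- the inclusion of the bad event
  have hsub : {ω | δ <
      |(m : ℝ)⁻¹ * ∑ i ∈ Finset.range m,
          (if (Z i ω).2.1 = d (Z i ω).1 then (1 : ℝ) else 0)
            / πm (Z i ω).2.1 (Z i ω).1 (θhat (nm m) ω) - 1|}
      ⊆ ({ω | δ/2 ≤ dist ((∑ i ∈ Finset.range m, W i ω) / m) ((fun _ => (1:ℝ)) ω)}
        ∪ {ω | ∃ a x, δ/2 * (ε*ε) < |πm a x (θhat (nm m) ω) - π0 a x|})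
        ∪ {ω | ¬ ∀ a x, ε ≤ πm a x (θhat (nm m) ω)} := by
    intro ω hω
    simp only [Set.mem_setOf_eq] at hω
    by_contra hcon
    simp only [Set.mem_union, Set.mem_setOf_eq, not_or, not_le, not_exists, not_lt,
      not_not] at hcon
    obtain ⟨⟨hor, hsupb⟩, hphat⟩ := hcon
    -- per-term bound
    have hterm : ∀ i ∈ Finset.range m,
        |(if (Z i ω).2.1 = d (Z i ω).1 then (1 : ℝ) else 0)
            / πm (Z i ω).2.1 (Z i ω).1 (θhat (nm m) ω) - W i ω| ≤ δ/2 := by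
      intro i _
      have h := aux_term ε (δ/2 * (ε*ε))
        (if (Z i ω).2.1 = d (Z i ω).1 then (1:ℝ) else 0)
        (πm (Z i ω).2.1 (Z i ω).1 (θhat (nm m) ω)) (π0 (Z i ω).2.1 (Z i ω).1)
        hε (by positivity) (by split <;> norm_num)
        (hphat _ _) (hπ0ε _ _) (hsupb _ _)
      have hεε : (ε*ε) ≠ 0 := by positivity
      rw [mul_div_cancel_right₀ _ hεε] at h
      exact h
    -- the averaged difference is at most δ/2
    have hdiff : |(m : ℝ)⁻¹ * (∑ i ∈ Finset.range m,
          (if (Z i ω).2.1 = d (Z i ω).1 then (1 : ℝ) else 0)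
            / πm (Z i ω).2.1 (Z i ω).1 (θhat (nm m) ω))
        - (m : ℝ)⁻¹ * ∑ i ∈ Finset.range m, W i ω| ≤ δ/2 := by
      rcases Nat.eq_zero_or_pos m with hm | hm
      · subst hm; simp; positivity
      have hmne : (m : ℝ) ≠ 0 := Nat.cast_ne_zero.mpr hm.ne'
      rw [← mul_sub, abs_mul, abs_of_nonneg (inv_nonneg.mpr (Nat.cast_nonneg m)),
        ← Finset.sum_sub_distrib]
      calc (m:ℝ)⁻¹ * |∑ i ∈ Finset.range m, _|
          ≤ (m:ℝ)⁻¹ * ∑ i ∈ Finset.range m,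
              |(if (Z i ω).2.1 = d (Z i ω).1 then (1 : ℝ) else 0)
                / πm (Z i ω).2.1 (Z i ω).1 (θhat (nm m) ω) - W i ω| :=
            mul_le_mul_of_nonneg_left (Finset.abs_sum_le_sum_abs _ _)
              (inv_nonneg.mpr (Nat.cast_nonneg m))
        _ ≤ (m:ℝ)⁻¹ * ((Finset.range m).card • (δ/2)) :=
            mul_le_mul_of_nonneg_left (Finset.sum_le_card_nsmul _ _ _ hterm)
              (inv_nonneg.mpr (Nat.cast_nonneg m))
        _ = δ/2 := by
            rw [Finset.card_range, nsmul_eq_mul, ← mul_assoc, inv_mul_cancel₀ hmne, one_mul]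
    have hor' : |(m : ℝ)⁻¹ * ∑ i ∈ Finset.range m, W i ω - 1| < δ/2 := by
      have : (∑ i ∈ Finset.range m, W i ω) / m = (m:ℝ)⁻¹ * ∑ i ∈ Finset.range m, W i ω := by
        rw [div_eq_inv_mul]
      rw [Real.dist_eq, this] at hor
      exact hor
    have htri := abs_sub_le
      ((m : ℝ)⁻¹ * ∑ i ∈ Finset.range m,
          (if (Z i ω).2.1 = d (Z i ω).1 then (1 : ℝ) else 0)
            / πm (Z i ω).2.1 (Z i ω).1 (θhat (nm m) ω))
      ((m : ℝ)⁻¹ * ∑ i ∈ Finset.range m, W i ω) 1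
    linarith
  calc P {ω | δ <
      |(m : ℝ)⁻¹ * ∑ i ∈ Finset.range m,
          (if (Z i ω).2.1 = d (Z i ω).1 then (1 : ℝ) else 0)
            / πm (Z i ω).2.1 (Z i ω).1 (θhat (nm m) ω) - 1|}
      ≤ P (({ω | δ/2 ≤ dist ((∑ i ∈ Finset.range m, W i ω) / m) ((fun _ => (1:ℝ)) ω)}
        ∪ {ω | ∃ a x, δ/2 * (ε*ε) < |πm a x (θhat (nm m) ω) - π0 a x|})
        ∪ {ω | ¬ ∀ a x, ε ≤ πm a x (θhat (nm m) ω)}) := measure_mono hsub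
    _ ≤ P ({ω | δ/2 ≤ dist ((∑ i ∈ Finset.range m, W i ω) / m) ((fun _ => (1:ℝ)) ω)}
        ∪ {ω | ∃ a x, δ/2 * (ε*ε) < |πm a x (θhat (nm m) ω) - π0 a x|})
        + P {ω | ¬ ∀ a x, ε ≤ πm a x (θhat (nm m) ω)} := measure_union_le _ _
    _ = P ({ω | δ/2 ≤ dist ((∑ i ∈ Finset.range m, W i ω) / m) ((fun _ => (1:ℝ)) ω)}
        ∪ {ω | ∃ a x, δ/2 * (ε*ε) < |πm a x (θhat (nm m) ω) - π0 a x|}) := by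
        rw [hB3 m, add_zero]
    _ ≤ P {ω | δ/2 ≤ dist ((∑ i ∈ Finset.range m, W i ω) / m) ((fun _ => (1:ℝ)) ω)}
        + P {ω | ∃ a x, δ/2 * (ε*ε) < |πm a x (θhat (nm m) ω) - π0 a x|} :=
        measure_union_le _ _
end

section
/- (Plug-in consistency of the population value ratio; the B₂ step.) Suppose E|Y| < ∞, sup_{a ∈ {0,1}, x ∈ ℝ^p} |π(a|x, θ̂_n) − π₀(a|x)| → 0 in probability as n → ∞, and ε ≤ π(a|x, θ̂_n) ≤ 1 and ε ≤ π₀(a|x) ≤ 1 for all a, x almost surely. Define the deterministic function H(θ) = E[Y · 1{A = d(X)}/π(A|X,θ)] / E[1{A = d(X)}/π(A|X,θ)] (expectations over (X, A, Y) with θ fixed). Then the random variables H(θ̂_n) converge in probability to V₀(d) as n → ∞. -/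
open MeasureTheory ProbabilityTheory Filter Topology Real
open scoped ENNReal

lemma aux_inv_sub {ε η u v : ℝ} (hε : 0 < ε) (hu : ε ≤ u) (hv : ε ≤ v)
    (h : |u - v| ≤ η) : |1/u - 1/v| ≤ η / ε^2 := by
  have hu0 : 0 < u := lt_of_lt_of_le hε hu
  have hv0 : 0 < v := lt_of_lt_of_le hε hv
  have heq : 1/u - 1/v = (v - u) / (u * v) := by field_simp
  rw [heq, abs_div, abs_of_pos (mul_pos hu0 hv0)]
  have h1 : |v - u| ≤ η := by rwa [abs_sub_comm]
  have h2 : ε^2 ≤ u * v := by nlinarith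
  exact div_le_div₀ (le_trans (abs_nonneg _) h1) h1 (by positivity) h2

lemma aux_bdd_int {Ω : Type*} [MeasurableSpace Ω] {P : Measure Ω} [IsProbabilityMeasure P]
    (g : Ω → ℝ) (C : ℝ) (hg : Measurable g) (hC : ∀ ω, |g ω| ≤ C) : Integrable g P := by
  refine (integrable_const C).mono' hg.aestronglyMeasurable (ae_of_all _ fun ω => ?_)
  simpa only [Real.norm_eq_abs] using hC ω

lemma aux_div_int {Ω : Type*} [MeasurableSpace Ω] {P : Measure Ω} [IsProbabilityMeasure P]
    {w f : Ω → ℝ} (hw : Integrable w P) (hwm : Measurable w) (hf : Measurable f)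
    {ε : ℝ} (hε : 0 < ε) (hfb : ∀ ω, ε ≤ f ω) :
    Integrable (fun ω => w ω / f ω) P := by
  refine (hw.abs.mul_const ε⁻¹).mono' (hwm.div hf).aestronglyMeasurable
    (ae_of_all _ fun ω => ?_)
  have h0 : 0 < f ω := lt_of_lt_of_le hε (hfb ω)
  rw [Real.norm_eq_abs, abs_div, abs_of_pos h0, div_eq_mul_inv]
  exact mul_le_mul_of_nonneg_left (inv_anti₀ hε (hfb ω)) (abs_nonneg _)

lemma aux_diff {Ω : Type*} [MeasurableSpace Ω] {P : Measure Ω} [IsProbabilityMeasure P]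
    (w f g : Ω → ℝ) (hw : Integrable w P) (hwm : Measurable w)
    (hf : Measurable f) (hg : Measurable g) {ε η : ℝ} (hε : 0 < ε)
    (hfb : ∀ ω, ε ≤ f ω) (hgb : ∀ ω, ε ≤ g ω) (hfg : ∀ ω, |f ω - g ω| ≤ η) :
    |(∫ ω, w ω / f ω ∂P) - ∫ ω, w ω / g ω ∂P| ≤ (∫ ω, |w ω| ∂P) * (η / ε^2) := by
  have h1 := aux_div_int hw hwm hf hε hfb
  have h2 := aux_div_int hw hwm hg hε hgb
  rw [← integral_sub h1 h2]
  calc |∫ ω, (w ω / f ω - w ω / g ω) ∂P|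
      ≤ ∫ ω, |w ω / f ω - w ω / g ω| ∂P := by
        simpa only [Real.norm_eq_abs] using
          norm_integral_le_integral_norm (μ := P) (fun ω => w ω / f ω - w ω / g ω)
    _ ≤ ∫ ω, |w ω| * (η / ε^2) ∂P := by
        refine integral_mono (h1.sub h2).abs (hw.abs.mul_const _) fun ω => ?_
        have he : w ω / f ω - w ω / g ω = w ω * (1 / f ω - 1 / g ω) := by ring
        rw [he, abs_mul]
        exact mul_le_mul_of_nonneg_left (aux_inv_sub hε (hfb ω) (hgb ω) (hfg ω)) (abs_nonneg _)
    _ = (∫ ω, |w ω| ∂P) * (η / ε^2) := integral_mul_const _ _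

lemma aux_abs {Ω : Type*} [MeasurableSpace Ω] {P : Measure Ω} [IsProbabilityMeasure P]
    (w f : Ω → ℝ) (hw : Integrable w P) (hwm : Measurable w) (hf : Measurable f)
    {ε : ℝ} (hε : 0 < ε) (hfb : ∀ ω, ε ≤ f ω) :
    |∫ ω, w ω / f ω ∂P| ≤ (∫ ω, |w ω| ∂P) * (1 / ε) := by
  calc |∫ ω, w ω / f ω ∂P| ≤ ∫ ω, |w ω / f ω| ∂P := by
        simpa only [Real.norm_eq_abs] using
          norm_integral_le_integral_norm (μ := P) (fun ω => w ω / f ω)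
    _ ≤ ∫ ω, |w ω| * (1 / ε) ∂P := by
        refine integral_mono (aux_div_int hw hwm hf hε hfb).abs (hw.abs.mul_const _) fun ω => ?_
        have h0 : 0 < f ω := lt_of_lt_of_le hε (hfb ω)
        rw [abs_div, abs_of_pos h0, div_eq_mul_inv, one_div]
        exact mul_le_mul_of_nonneg_left (inv_anti₀ hε (hfb ω)) (abs_nonneg _)
    _ = _ := integral_mul_const _ _

lemma aux_D0 {Ω : Type*} [MeasurableSpace Ω] (P : Measure Ω) [IsProbabilityMeasure P]
    {p : ℕ} (X : Ω → EuclideanSpace ℝ (Fin p)) (A : Ω → Bool)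
    (hX : Measurable X) (hA : Measurable A)
    (ε : ℝ) (hε : 0 < ε)
    (π0 : Bool → EuclideanSpace ℝ (Fin p) → ℝ) (hπ0meas : ∀ a, Measurable (π0 a))
    (hπ0b : ∀ a x, ε ≤ π0 a x ∧ π0 a x ≤ 1)
    (hπ0cond : ∀ a : Bool, (fun ω => π0 a (X ω)) =ᵐ[P]
        P[fun ω => (if A ω = a then (1 : ℝ) else 0) | MeasurableSpace.comap X inferInstance])
    (d : EuclideanSpace ℝ (Fin p) → Bool) (hd : Measurable d) :
    (∫ ω, (if A ω = d (X ω) then (1 : ℝ) else 0) / π0 (A ω) (X ω) ∂P) = 1 := by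
  have hm : MeasurableSpace.comap X inferInstance ≤ (by infer_instance : MeasurableSpace Ω) :=
    hX.comap_le
  have hXm : Measurable[MeasurableSpace.comap X inferInstance] X := fun s hs => ⟨s, hs, rfl⟩
  set c : Bool → Ω → ℝ := fun a ω => if d (X ω) = a then (π0 a (X ω))⁻¹ else 0 with hc_def
  set F : Bool → Ω → ℝ := fun a ω => if A ω = a then (1 : ℝ) else 0 with hF_def
  have hπ0pos : ∀ a x, (0 : ℝ) < π0 a x := fun a x => lt_of_lt_of_le hε (hπ0b a x).1
  have hcm : ∀ a, Measurable[MeasurableSpace.comap X inferInstance] (c a) := by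
    intro a
    have hgm : Measurable fun x : EuclideanSpace ℝ (Fin p) =>
        if d x = a then (π0 a x)⁻¹ else 0 :=
      Measurable.ite (hd (measurableSet_singleton a)) (hπ0meas a).inv measurable_const
    exact hgm.comp hXm
  have hcb : ∀ a ω, |c a ω| ≤ ε⁻¹ := by
    intro a ω
    by_cases h : d (X ω) = a
    · simp only [hc_def, h, if_true]
      rw [abs_of_pos (by exact inv_pos.mpr (hπ0pos a (X ω)))]
      exact inv_anti₀ hε (hπ0b a (X ω)).1
    · simp only [hc_def, h, if_false]
      rw [abs_zero]; positivity
  have hFm : ∀ a, Measurable (F a) :=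
    fun a => Measurable.ite (hA (measurableSet_singleton a)) measurable_const measurable_const
  have hFb : ∀ a ω, |F a ω| ≤ 1 := by
    intro a ω; by_cases h : A ω = a <;> simp [hF_def, h]
  have hFint : ∀ a, Integrable (F a) P := fun a => aux_bdd_int _ 1 (hFm a) (hFb a)
  have hcFint : ∀ a, Integrable (fun ω => c a ω * F a ω) P := by
    intro a
    refine aux_bdd_int _ ε⁻¹ (((hcm a).mono hm le_rfl).mul (hFm a)) fun ω => ?_
    rw [abs_mul]
    calc |c a ω| * |F a ω| ≤ ε⁻¹ * 1 :=
          mul_le_mul (hcb a ω) (hFb a ω) (abs_nonneg _) (by positivity)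
      _ = ε⁻¹ := mul_one _
  have hcπint : ∀ a, Integrable (fun ω => c a ω * π0 a (X ω)) P := by
    intro a
    refine aux_bdd_int _ ε⁻¹ (((hcm a).mono hm le_rfl).mul ((hπ0meas a).comp hX)) fun ω => ?_
    rw [abs_mul]
    calc |c a ω| * |π0 a (X ω)| ≤ ε⁻¹ * 1 := by
          refine mul_le_mul (hcb a ω) ?_ (abs_nonneg _) (by positivity)
          rw [abs_of_pos (hπ0pos a (X ω))]; exact (hπ0b a (X ω)).2
      _ = ε⁻¹ := mul_one _
  have hkey : ∀ a, ∫ ω, c a ω * F a ω ∂P = ∫ ω, c a ω * π0 a (X ω) ∂P := by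
    intro a
    have hmul := condExp_mul_of_stronglyMeasurable_left (μ := P)
      (m := MeasurableSpace.comap X inferInstance)
      ((hcm a).stronglyMeasurable) (hcFint a) (hFint a)
    have hcond : (fun ω => π0 a (X ω))
        =ᵐ[P] P[F a|MeasurableSpace.comap X inferInstance] := hπ0cond a
    calc ∫ ω, c a ω * F a ω ∂P
        = ∫ ω, (P[c a * F a|MeasurableSpace.comap X inferInstance]) ω ∂P :=
          (integral_condExp hm (f := c a * F a)).symm
      _ = ∫ ω, c a ω * (P[F a|MeasurableSpace.comap X inferInstance]) ω ∂P :=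
          integral_congr_ae hmul
      _ = ∫ ω, c a ω * π0 a (X ω) ∂P := by
          refine integral_congr_ae ?_
          filter_upwards [hcond] with ω h
          rw [← h]
  have hdecomp : (fun ω => (if A ω = d (X ω) then (1 : ℝ) else 0) / π0 (A ω) (X ω))
      = fun ω => c true ω * F true ω + c false ω * F false ω := by
    funext ω
    cases hAω : A ω <;> cases hdω : d (X ω) <;>
      simp [hc_def, hF_def, hAω, hdω, one_div]
  rw [hdecomp, integral_add (hcFint true) (hcFint false), hkey true, hkey false]
  have hone : (∫ ω, c true ω * π0 true (X ω) ∂P) + (∫ ω, c false ω * π0 false (X ω) ∂P)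
      = ∫ ω, (1 : ℝ) ∂P := by
    rw [← integral_add (hcπint true) (hcπint false)]
    refine integral_congr_ae (ae_of_all _ fun ω => ?_)
    cases hdω : d (X ω) <;>
      simp [hc_def, hdω, inv_mul_cancel₀ (ne_of_gt (hπ0pos _ (X ω)))]
  rw [hone]
  simp
/-- (Plug-in consistency of the population value ratio; the B₂ step.) If `E|Y| < ∞`,
`sup_{a,x} |π(a|x, θ̂_n) − π₀(a|x)| → 0` in probability, and the propensities lie in `[ε, 1]`
(the estimated ones almost surely), then `H(θ̂_n) → V₀(d)` in probability, where
`H(θ) = E[Y·1{A = d(X)}/π(A|X,θ)] / E[1{A = d(X)}/π(A|X,θ)]`. -/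
theorem stmt_14
    {Ω : Type*} [MeasurableSpace Ω] (P : Measure Ω) [IsProbabilityMeasure P]
    {p : ℕ}
    -- population variables
    (X : Ω → EuclideanSpace ℝ (Fin p)) (A : Ω → Bool) (Y : Ω → ℝ)
    (hX : Measurable X) (hA : Measurable A) (hY : Measurable Y)
    (hYint : Integrable Y P)
    -- true propensity score, with values in `[ε, 1]`
    (ε : ℝ) (hε : 0 < ε) (hε' : ε ≤ 1 / 2)
    (π0 : Bool → EuclideanSpace ℝ (Fin p) → ℝ)
    (hπ0meas : ∀ a, Measurable (π0 a))
    (hπ0b : ∀ a x, ε ≤ π0 a x ∧ π0 a x ≤ 1)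
    (hπ0cond : ∀ a : Bool,
      (fun ω => π0 a (X ω)) =ᵐ[P]
        P[fun ω => (if A ω = a then (1 : ℝ) else 0) | MeasurableSpace.comap X inferInstance])
    -- decision rule
    (d : EuclideanSpace ℝ (Fin p) → Bool) (hd : Measurable d)
    -- parametric propensity model
    (θ0 : EuclideanSpace ℝ (Fin p))
    (πm : Bool → EuclideanSpace ℝ (Fin p) → EuclideanSpace ℝ (Fin p) → ℝ)
    (hπmmeas : ∀ a, Measurable
      (fun q : EuclideanSpace ℝ (Fin p) × EuclideanSpace ℝ (Fin p) => πm a q.1 q.2))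
    (hπmθ0 : ∀ a x, πm a x θ0 = π0 a x)
    -- estimators
    (θhat : ℕ → Ω → EuclideanSpace ℝ (Fin p)) (hθmeas : ∀ n, Measurable (θhat n))
    -- uniform consistency of the plugged-in propensity
    (hsup : ∀ δ : ℝ, 0 < δ →
      Tendsto (fun n : ℕ =>
        P {ω | ∃ a x, δ < |πm a x (θhat n ω) - π0 a x|}) atTop (𝓝 0))
    -- bounds on the plugged-in propensity
    (hπhatb : ∀ n : ℕ, ∀ᵐ ω ∂P, ∀ a x,
      ε ≤ πm a x (θhat n ω) ∧ πm a x (θhat n ω) ≤ 1)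
    -- the deterministic ratio `H`
    (H : EuclideanSpace ℝ (Fin p) → ℝ)
    (hH : ∀ θ, H θ =
      (∫ ω, Y ω * (if A ω = d (X ω) then (1 : ℝ) else 0) / πm (A ω) (X ω) θ ∂P)
        / (∫ ω, (if A ω = d (X ω) then (1 : ℝ) else 0) / πm (A ω) (X ω) θ ∂P))
    -- the value of `d`
    (V0 : ℝ)
    (hV0 : V0 = ∫ ω, Y ω * (if A ω = d (X ω) then (1 : ℝ) else 0) / π0 (A ω) (X ω) ∂P) :
    -- conclusion: `H(θ̂_n) → V₀(d)` in probability
    ∀ δ : ℝ, 0 < δ →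
      Tendsto (fun n : ℕ => P {ω | δ < |H (θhat n ω) - V0|}) atTop (𝓝 0) := by
  intro δ hδ
  -- measurability of the indicator
  have hindm : Measurable (fun ω => if A ω = d (X ω) then (1 : ℝ) else 0) := by
    refine Measurable.ite ?_ measurable_const measurable_const
    exact measurableSet_eq_fun hA (hd.comp hX)
  have hindb : ∀ ω, |if A ω = d (X ω) then (1 : ℝ) else 0| ≤ 1 := by
    intro ω; by_cases h : A ω = d (X ω) <;> simp [h]
  -- the weight functions
  have hw1m : Measurable (fun ω => Y ω * (if A ω = d (X ω) then (1 : ℝ) else 0)) :=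
    hY.mul hindm
  have hw1int : Integrable (fun ω => Y ω * (if A ω = d (X ω) then (1 : ℝ) else 0)) P := by
    refine hYint.abs.mono' hw1m.aestronglyMeasurable (ae_of_all _ fun ω => ?_)
    rw [Real.norm_eq_abs, abs_mul]
    calc |Y ω| * |if A ω = d (X ω) then (1 : ℝ) else 0| ≤ |Y ω| * 1 :=
          mul_le_mul_of_nonneg_left (hindb ω) (abs_nonneg _)
      _ = |Y ω| := mul_one _
  have hw2int : Integrable (fun ω => if A ω = d (X ω) then (1 : ℝ) else 0) P :=
    aux_bdd_int _ 1 hindm hindb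
  set M1 : ℝ := ∫ ω, |Y ω * (if A ω = d (X ω) then (1 : ℝ) else 0)| ∂P with hM1_def
  have hM1 : 0 ≤ M1 := integral_nonneg fun ω => abs_nonneg _
  have hw2abs : (∫ ω, |if A ω = d (X ω) then (1 : ℝ) else 0| ∂P) ≤ 1 := by
    calc (∫ ω, |if A ω = d (X ω) then (1 : ℝ) else 0| ∂P) ≤ ∫ _, (1 : ℝ) ∂P :=
          integral_mono hw2int.abs (integrable_const 1) hindb
      _ = 1 := by simp
  -- the constant and the threshold
  have hu : (0 : ℝ) < 1 + 1 / ε := by positivity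
  have he2 : (0 : ℝ) < ε ^ 2 := by positivity
  set η : ℝ := min (ε ^ 2 / 2) (δ * ε ^ 2 / (4 * ((M1 + 1) * (1 + 1 / ε)))) with hη_def
  have hη : 0 < η := lt_min (by positivity) (by positivity)
  have hη1 : η ≤ ε ^ 2 / 2 := min_le_left _ _
  have hη2 : η ≤ δ * ε ^ 2 / (4 * ((M1 + 1) * (1 + 1 / ε))) := min_le_right _ _
  have hη2' : η * (4 * ((M1 + 1) * (1 + 1 / ε))) ≤ δ * ε ^ 2 := by
    rw [le_div_iff₀ (by positivity)] at hη2; linarith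
  -- the denominator at the truth is 1
  have hD0 : (∫ ω, (if A ω = d (X ω) then (1 : ℝ) else 0) / π0 (A ω) (X ω) ∂P) = 1 :=
    aux_D0 P X A hX hA ε hε π0 hπ0meas hπ0b hπ0cond d hd
  -- measurability of the true propensity composed with (A, X)
  have hgm : Measurable (fun ω => π0 (A ω) (X ω)) := by
    have he : (fun ω => π0 (A ω) (X ω))
        = fun ω => if A ω = true then π0 true (X ω) else π0 false (X ω) := by
      funext ω; cases h : A ω <;> simp [h]
    rw [he]
    exact Measurable.ite (hA (measurableSet_singleton true))
      ((hπ0meas true).comp hX) ((hπ0meas false).comp hX)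
  -- the key deterministic estimate
  have key : ∀ θ : EuclideanSpace ℝ (Fin p),
      (∀ a x, ε ≤ πm a x θ ∧ πm a x θ ≤ 1) →
      (∀ a x, |πm a x θ - π0 a x| ≤ η) → |H θ - V0| < δ := by
    intro θ hb hc
    have hfm : Measurable (fun ω => πm (A ω) (X ω) θ) := by
      have h1 : ∀ a : Bool, Measurable fun x : EuclideanSpace ℝ (Fin p) => πm a x θ :=
        fun a => (hπmmeas a).comp (measurable_id.prodMk measurable_const)
      have he : (fun ω => πm (A ω) (X ω) θ)
          = fun ω => if A ω = true then πm true (X ω) θ else πm false (X ω) θ := by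
        funext ω; cases h : A ω <;> simp [h]
      rw [he]
      exact Measurable.ite (hA (measurableSet_singleton true))
        ((h1 true).comp hX) ((h1 false).comp hX)
    have hfb : ∀ ω, ε ≤ πm (A ω) (X ω) θ := fun ω => (hb _ _).1
    have hgb : ∀ ω, ε ≤ π0 (A ω) (X ω) := fun ω => (hπ0b _ _).1
    have hfg : ∀ ω, |πm (A ω) (X ω) θ - π0 (A ω) (X ω)| ≤ η := fun ω => hc _ _
    have hN : |(∫ ω, Y ω * (if A ω = d (X ω) then (1 : ℝ) else 0) / πm (A ω) (X ω) θ ∂P)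
        - ∫ ω, Y ω * (if A ω = d (X ω) then (1 : ℝ) else 0) / π0 (A ω) (X ω) ∂P|
        ≤ M1 * (η / ε ^ 2) :=
      aux_diff _ _ _ hw1int hw1m hfm hgm hε hfb hgb hfg
    have hDraw : |(∫ ω, (if A ω = d (X ω) then (1 : ℝ) else 0) / πm (A ω) (X ω) θ ∂P)
        - ∫ ω, (if A ω = d (X ω) then (1 : ℝ) else 0) / π0 (A ω) (X ω) ∂P|
        ≤ (∫ ω, |if A ω = d (X ω) then (1 : ℝ) else 0| ∂P) * (η / ε ^ 2) :=
      aux_diff _ _ _ hw2int hindm hfm hgm hε hfb hgb hfg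
    rw [hD0] at hDraw
    have hD : |(∫ ω, (if A ω = d (X ω) then (1 : ℝ) else 0) / πm (A ω) (X ω) θ ∂P) - 1|
        ≤ η / ε ^ 2 := by
      refine hDraw.trans ?_
      calc (∫ ω, |if A ω = d (X ω) then (1 : ℝ) else 0| ∂P) * (η / ε ^ 2)
          ≤ 1 * (η / ε ^ 2) := mul_le_mul_of_nonneg_right hw2abs (by positivity)
        _ = η / ε ^ 2 := one_mul _
    have hN0 : |∫ ω, Y ω * (if A ω = d (X ω) then (1 : ℝ) else 0) / π0 (A ω) (X ω) ∂P|
        ≤ M1 * (1 / ε) :=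
      aux_abs _ _ hw1int hw1m hgm hε hgb
    rw [hH θ, hV0]
    set NN := ∫ ω, Y ω * (if A ω = d (X ω) then (1 : ℝ) else 0) / πm (A ω) (X ω) θ ∂P with hNN
    set DD := ∫ ω, (if A ω = d (X ω) then (1 : ℝ) else 0) / πm (A ω) (X ω) θ ∂P with hDD
    set N0 := ∫ ω, Y ω * (if A ω = d (X ω) then (1 : ℝ) else 0) / π0 (A ω) (X ω) ∂P with hN0d
    have hhalf : η / ε ^ 2 ≤ 1 / 2 := by
      rw [div_le_iff₀ he2]; nlinarith
    have hDpos : (1 : ℝ) / 2 ≤ DD := by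
      have h1 := (abs_le.mp hD).1
      linarith
    have hDpos' : 0 < DD := by linarith
    have heq : NN / DD - N0 = (NN - N0 * DD) / DD := by
      field_simp
    have hnum : |NN - N0 * DD| ≤ M1 * (1 + 1 / ε) * (η / ε ^ 2) := by
      have h3 : NN - N0 * DD = (NN - N0) + N0 * (1 - DD) := by ring
      rw [h3]
      calc |(NN - N0) + N0 * (1 - DD)| ≤ |NN - N0| + |N0| * |1 - DD| := by
            refine (abs_add_le _ _).trans ?_; rw [abs_mul]
        _ ≤ M1 * (η / ε ^ 2) + (M1 * (1 / ε)) * (η / ε ^ 2) := by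
            refine add_le_add hN ?_
            refine mul_le_mul hN0 ?_ (abs_nonneg _) (by positivity)
            rwa [abs_sub_comm] at hD
        _ = M1 * (1 + 1 / ε) * (η / ε ^ 2) := by ring
    have hfar : 2 * (M1 * (1 + 1 / ε) * (η / ε ^ 2)) ≤ δ / 2 := by
      rw [← mul_le_mul_iff_of_pos_right he2]
      have e1 : 2 * (M1 * (1 + 1 / ε) * (η / ε ^ 2)) * ε ^ 2
          = 2 * (M1 * (1 + 1 / ε)) * η := by field_simp
      rw [e1]
      nlinarith [mul_nonneg hu.le hη.le]
    calc |NN / DD - N0| = |NN - N0 * DD| / DD := by rw [heq, abs_div, abs_of_pos hDpos']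
      _ ≤ |NN - N0 * DD| / (1 / 2) :=
          div_le_div_of_nonneg_left (abs_nonneg _) (by norm_num) hDpos
      _ = 2 * |NN - N0 * DD| := by ring
      _ ≤ 2 * (M1 * (1 + 1 / ε) * (η / ε ^ 2)) := by linarith
      _ ≤ δ / 2 := hfar
      _ < δ := by linarith
  -- conclude by squeezing
  refine tendsto_of_tendsto_of_tendsto_of_le_of_le tendsto_const_nhds (hsup η hη)
    (fun n => zero_le) (fun n => ?_)
  refine measure_mono_ae ?_
  filter_upwards [hπhatb n] with ω hb
  intro hmem
  show ∃ (a : Bool) (x : EuclideanSpace ℝ (Fin p)), η < |πm a x (θhat n ω) - π0 a x|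
  by_contra hcon
  push_neg at hcon
  have := key (θhat n ω) hb hcon
  exact absurd hmem (not_lt.mpr this.le)
end

section
/- (Stochastic equicontinuity of the plug-in empirical process; the B₁ step.) For θ ∈ ℝ^p define f_θ(x,a,y) = y · 1{a = d(x)} / π(a|x,θ). Assume: (i) there is a neighborhood Θ₀ of θ₀ on which π(a|x,θ) ≥ ε for all a, x; (ii) |π(a|x,θ) − π(a|x,θ′)| ≤ L(x)‖θ − θ′‖ for all a, x and θ, θ′ ∈ Θ₀, with E[Y²(1 + L(X)²)] < ∞; (iii) θ̂_{n_m} → θ₀ in probability as m → ∞ and θ̂_{n_m} is independent of the test data. Then m^{−1/2} Σ_{i=1}^m [ f_{θ̂_{n_m}}(X_i,A_i,Y_i) − F(θ̂_{n_m}) ] − m^{−1/2} Σ_{i=1}^m [ f_{θ₀}(X_i,A_i,Y_i) − F(θ₀) ] converges to 0 in probability as m → ∞, where F(θ) = E[f_θ(X,A,Y)] is the deterministic mean function. -/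
open MeasureTheory ProbabilityTheory Filter Topology Real
open scoped ENNReal


/-- Chebyshev bound for normalized centered sums of iid-type variables. -/
lemma aux_cheb {Ω : Type*} [MeasurableSpace Ω] (P : Measure Ω) [IsProbabilityMeasure P]
    (W : ℕ → Ω → ℝ)
    (hindep : ∀ i j, i ≠ j → IndepFun (W i) (W j) P)
    (hmem : ∀ i, MemLp (W i) 2 P)
    (μg v : ℝ)
    (hint : ∀ i, ∫ ω, W i ω ∂P = μg)
    (hvar : ∀ i, variance (W i) P ≤ v)
    (δ : ℝ) (hδ : 0 < δ) (m : ℕ) :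
    P {ω | δ < |(Real.sqrt m)⁻¹ * ∑ i ∈ Finset.range m, (W i ω - μg)|} ≤
      ENNReal.ofReal (v / δ ^ 2) := by
  rcases Nat.eq_zero_or_pos m with hm | hm
  · subst hm
    simp [hδ.not_gt]
  have hmpos : (0 : ℝ) < m := by exact_mod_cast hm
  have hsq : (0 : ℝ) < Real.sqrt m := Real.sqrt_pos.2 hmpos
  set S : Ω → ℝ := ∑ i ∈ Finset.range m, W i with hS
  have hSmem : MemLp S 2 P := memLp_finset_sum' _ fun i _ => hmem i
  have hSapp : ∀ ω, S ω = ∑ i ∈ Finset.range m, W i ω := fun ω => by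
    simp [hS, Finset.sum_apply]
  have hSmean : ∫ ω, S ω ∂P = m * μg := by
    simp_rw [hSapp]
    rw [integral_finset_sum _ fun i _ => (hmem i).integrable one_le_two]
    simp [hint, Finset.sum_const, Finset.card_range, mul_comm]
  have hSvar : variance S P ≤ m * v := by
    rw [hS, IndepFun.variance_sum (fun i _ => hmem i)
      (fun i _ j _ hij => hindep i j hij)]
    calc ∑ i ∈ Finset.range m, variance (W i) P ≤ ∑ _i ∈ Finset.range m, v :=
          Finset.sum_le_sum fun i _ => hvar i
      _ = m * v := by simp [Finset.sum_const, Finset.card_range, mul_comm]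
  have hc : (0 : ℝ) < δ * Real.sqrt m := mul_pos hδ hsq
  have hsub : {ω | δ < |(Real.sqrt m)⁻¹ * ∑ i ∈ Finset.range m, (W i ω - μg)|} ⊆
      {ω | δ * Real.sqrt m ≤ |S ω - ∫ ω', S ω' ∂P|} := by
    intro ω hω
    simp only [Set.mem_setOf_eq] at hω ⊢
    rw [hSmean, hSapp]
    have hsum : ∑ i ∈ Finset.range m, (W i ω - μg) =
        (∑ i ∈ Finset.range m, W i ω) - m * μg := by
      rw [Finset.sum_sub_distrib]
      simp [Finset.sum_const, Finset.card_range, mul_comm]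
    rw [hsum] at hω
    rw [abs_mul, abs_inv, abs_of_pos hsq] at hω
    have := (lt_div_iff₀' hsq).1 (by rwa [inv_mul_eq_div] at hω)
    linarith [this]
  calc P _ ≤ P {ω | δ * Real.sqrt m ≤ |S ω - ∫ ω', S ω' ∂P|} := measure_mono hsub
    _ ≤ ENNReal.ofReal (variance S P / (δ * Real.sqrt m) ^ 2) :=
        meas_ge_le_variance_div_sq hSmem hc
    _ ≤ ENNReal.ofReal (v / δ ^ 2) := by
        apply ENNReal.ofReal_le_ofReal
        have h1 : (δ * Real.sqrt m) ^ 2 = δ ^ 2 * m := by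
          rw [mul_pow, Real.sq_sqrt hmpos.le]
        rw [h1]
        rw [div_le_div_iff₀ (by positivity) (by positivity)]
        have h2 : variance S P ≤ m * v := hSvar
        nlinarith [sq_nonneg δ, hmpos]

/-- Disintegration bound using independence. -/
lemma aux_indep {Ω : Type*} [MeasurableSpace Ω] (P : Measure Ω) [IsProbabilityMeasure P]
    {α β : Type*} [MeasurableSpace α] [MeasurableSpace β]
    (G : Ω → α) (Zv : Ω → β) (hG : Measurable G) (hZv : Measurable Zv)
    (hind : IndepFun G Zv P) (B : Set (α × β)) (hB : MeasurableSet B)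
    (c : ℝ≥0∞) (hc : ∀ a, P {ω | (a, Zv ω) ∈ B} ≤ c) :
    P {ω | (G ω, Zv ω) ∈ B} ≤ c := by
  haveI : IsProbabilityMeasure (P.map G) := Measure.isProbabilityMeasure_map hG.aemeasurable
  haveI : IsProbabilityMeasure (P.map Zv) := Measure.isProbabilityMeasure_map hZv.aemeasurable
  have hmap : P.map (fun ω => (G ω, Zv ω)) = (P.map G).prod (P.map Zv) :=
    (indepFun_iff_map_prod_eq_prod_map_map hG.aemeasurable hZv.aemeasurable).1 hind
  have hpair : Measurable fun ω => (G ω, Zv ω) := hG.prodMk hZv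
  have h1 : P {ω | (G ω, Zv ω) ∈ B} = (P.map (fun ω => (G ω, Zv ω))) B := by
    rw [Measure.map_apply hpair hB]; rfl
  rw [h1, hmap, Measure.prod_apply hB]
  have h2 : ∀ a, (P.map Zv) (Prod.mk a ⁻¹' B) ≤ c := by
    intro a
    have hBa : MeasurableSet (Prod.mk a ⁻¹' B) := measurable_prodMk_left hB
    rw [Measure.map_apply hZv hBa]
    exact hc a
  calc ∫⁻ a, (P.map Zv) (Prod.mk a ⁻¹' B) ∂(P.map G) ≤ ∫⁻ _a, c ∂(P.map G) :=
        lintegral_mono h2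
    _ = c := by simp

/-- (Stochastic equicontinuity of the plug-in empirical process; the B₁ step.) Under a local
lower bound and a local Lipschitz condition on the propensity model around `θ₀`, with
`E[Y²(1 + L(X)²)] < ∞`, `θ̂_{n_m} → θ₀` in probability and `θ̂_{n_m}` independent of the test
data, the difference of centered empirical processes
`m^{−1/2} Σ_{i<m} [f_{θ̂}(Z_i) − F(θ̂)] − m^{−1/2} Σ_{i<m} [f_{θ₀}(Z_i) − F(θ₀)]`
converges to `0` in probability, where `f_θ(x,a,y) = y·1{a = d(x)}/π(a|x,θ)` and
`F(θ) = E[f_θ(X,A,Y)]`. -/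
theorem stmt_15
    {Ω : Type*} [MeasurableSpace Ω] (P : Measure Ω) [IsProbabilityMeasure P]
    {p : ℕ}
    -- population variables
    (X : Ω → EuclideanSpace ℝ (Fin p)) (A : Ω → Bool) (Y : Ω → ℝ)
    (hX : Measurable X) (hA : Measurable A) (hY : Measurable Y)
    (hYint : Integrable Y P)
    -- true propensity score
    (ε : ℝ) (hε : 0 < ε) (hε' : ε ≤ 1 / 2)
    (π0 : Bool → EuclideanSpace ℝ (Fin p) → ℝ)
    (hπ0meas : ∀ a, Measurable (π0 a)) (hπ0ε : ∀ a x, ε ≤ π0 a x)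
    -- decision rule
    (d : EuclideanSpace ℝ (Fin p) → Bool) (hd : Measurable d)
    -- i.i.d. test data
    (Z : ℕ → Ω → EuclideanSpace ℝ (Fin p) × Bool × ℝ)
    (hZmeas : ∀ i, Measurable (Z i))
    (hZindep : iIndepFun Z P)
    (hZident : ∀ i, IdentDistrib (Z i) (fun ω => (X ω, A ω, Y ω)) P P)
    -- parametric propensity model
    (θ0 : EuclideanSpace ℝ (Fin p))
    (πm : Bool → EuclideanSpace ℝ (Fin p) → EuclideanSpace ℝ (Fin p) → ℝ)
    (hπmmeas : ∀ a, Measurable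
      (fun q : EuclideanSpace ℝ (Fin p) × EuclideanSpace ℝ (Fin p) => πm a q.1 q.2))
    (hπmθ0 : ∀ a x, πm a x θ0 = π0 a x)
    -- training-set estimator with coupled training size
    (θhat : ℕ → Ω → EuclideanSpace ℝ (Fin p)) (hθmeas : ∀ n, Measurable (θhat n))
    (nm : ℕ → ℕ)
    -- (i) a neighborhood `Θ₀` of `θ₀` on which the model is bounded below by `ε`
    (Θ0 : Set (EuclideanSpace ℝ (Fin p))) (hΘ0 : Θ0 ∈ nhds θ0)
    (hεΘ0 : ∀ a x, ∀ θ ∈ Θ0, ε ≤ πm a x θ)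
    -- (ii) local Lipschitz condition with square-integrable envelope
    (L : EuclideanSpace ℝ (Fin p) → ℝ) (hLmeas : Measurable L)
    (hLip : ∀ a x, ∀ θ ∈ Θ0, ∀ θ' ∈ Θ0, |πm a x θ - πm a x θ'| ≤ L x * ‖θ - θ'‖)
    (hLint : Integrable (fun ω => (Y ω) ^ 2 * (1 + (L (X ω)) ^ 2)) P)
    -- (iii) consistency of `θ̂_{n_m}` and independence from the test data
    (hθprob : ∀ δ : ℝ, 0 < δ →
      Tendsto (fun m : ℕ => P {ω | δ < ‖θhat (nm m) ω - θ0‖}) atTop (𝓝 0))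
    (hθindep : ∀ m : ℕ, IndepFun (θhat (nm m)) (fun ω => fun i => Z i ω) P)
    -- `f_θ` and its deterministic mean `F`
    (f : EuclideanSpace ℝ (Fin p) → EuclideanSpace ℝ (Fin p) × Bool × ℝ → ℝ)
    (hf : ∀ θ x a y, f θ (x, a, y) = y * (if a = d x then (1 : ℝ) else 0) / πm a x θ)
    (F : EuclideanSpace ℝ (Fin p) → ℝ)
    (hF : ∀ θ, F θ = ∫ ω, f θ (X ω, A ω, Y ω) ∂P) :
    -- conclusion
    ∀ δ : ℝ, 0 < δ →
      Tendsto (fun m : ℕ => P {ω | δ <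
          |(Real.sqrt m)⁻¹ * ∑ i ∈ Finset.range m,
              (f (θhat (nm m) ω) (Z i ω) - F (θhat (nm m) ω))
            - (Real.sqrt m)⁻¹ * ∑ i ∈ Finset.range m,
              (f θ0 (Z i ω) - F θ0)|}) atTop (𝓝 0) := by
  intro δ hδ
  have hθ0mem : θ0 ∈ Θ0 := mem_of_mem_nhds hΘ0
  obtain ⟨η0, hη0, hball⟩ : ∃ η0 > 0, Metric.closedBall θ0 η0 ⊆ Θ0 :=
    Metric.nhds_basis_closedBall.mem_iff.1 hΘ0
  set I : ℝ := ∫ ω, (Y ω) ^ 2 * (1 + (L (X ω)) ^ 2) ∂P with hIdef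
  have hI0 : 0 ≤ I := integral_nonneg fun ω => by positivity
  set C : ℝ := I / ε ^ 4 with hCdef
  have hC0 : 0 ≤ C := by positivity
  -- joint measurability of `f`
  have hfm : Measurable (fun q : EuclideanSpace ℝ (Fin p) ×
      (EuclideanSpace ℝ (Fin p) × Bool × ℝ) => f q.1 q.2) := by
    have hfeq : (fun q : EuclideanSpace ℝ (Fin p) ×
        (EuclideanSpace ℝ (Fin p) × Bool × ℝ) => f q.1 q.2) = fun q =>
        q.2.2.2 * (if q.2.2.1 = d q.2.1 then (1 : ℝ) else 0) / πm q.2.2.1 q.2.1 q.1 := by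
      funext q
      obtain ⟨θ, x, a, y⟩ := q
      exact hf θ x a y
    rw [hfeq]
    have hmb : Measurable (fun q : EuclideanSpace ℝ (Fin p) ×
        (EuclideanSpace ℝ (Fin p) × Bool × ℝ) => q.2.2.1) :=
      measurable_snd.snd.fst
    have hmx : Measurable (fun q : EuclideanSpace ℝ (Fin p) ×
        (EuclideanSpace ℝ (Fin p) × Bool × ℝ) => q.2.1) := measurable_snd.fst
    have hmy : Measurable (fun q : EuclideanSpace ℝ (Fin p) ×
        (EuclideanSpace ℝ (Fin p) × Bool × ℝ) => q.2.2.2) := measurable_snd.snd.snd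
    have hπpart : Measurable (fun q : EuclideanSpace ℝ (Fin p) ×
        (EuclideanSpace ℝ (Fin p) × Bool × ℝ) => πm q.2.2.1 q.2.1 q.1) := by
      have : (fun q : EuclideanSpace ℝ (Fin p) ×
          (EuclideanSpace ℝ (Fin p) × Bool × ℝ) => πm q.2.2.1 q.2.1 q.1) =
          fun q => if q.2.2.1 = true then πm true q.2.1 q.1 else πm false q.2.1 q.1 := by
        funext q
        rcases Bool.eq_false_or_eq_true q.2.2.1 with h | h <;> simp [h]
      rw [this]
      refine Measurable.ite (measurableSet_eq_fun hmb measurable_const) ?_ ?_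
      · exact (hπmmeas true).comp (hmx.prodMk measurable_fst)
      · exact (hπmmeas false).comp (hmx.prodMk measurable_fst)
    have hindm : Measurable (fun q : EuclideanSpace ℝ (Fin p) ×
        (EuclideanSpace ℝ (Fin p) × Bool × ℝ) => if q.2.2.1 = d q.2.1 then (1 : ℝ) else 0) := by
      refine Measurable.ite (measurableSet_eq_fun hmb (hd.comp hmx)) ?_ ?_ <;>
        exact measurable_const
    exact (hmy.mul hindm).div hπpart
  have hfθm : ∀ θ, Measurable (f θ) := fun θ =>
    hfm.comp (measurable_const.prodMk measurable_id)
  have hgθm : ∀ θ, Measurable (fun z : EuclideanSpace ℝ (Fin p) × Bool × ℝ =>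
      f θ z - f θ0 z) := fun θ => (hfθm θ).sub (hfθm θ0)
  have hXAY : Measurable (fun ω => (X ω, A ω, Y ω)) := hX.prodMk (hA.prodMk hY)
  -- measurability of `F`
  have hFm : Measurable F := by
    have h1 : StronglyMeasurable (fun q : EuclideanSpace ℝ (Fin p) × Ω =>
        f q.1 (X q.2, A q.2, Y q.2)) :=
      (hfm.comp (measurable_fst.prodMk (hXAY.comp measurable_snd))).stronglyMeasurable
    have h2 := h1.integral_prod_right' (ν := P)
    have h3 : F = fun θ => ∫ ω, f θ (X ω, A ω, Y ω) ∂P := funext hF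
    rw [h3]
    exact h2.measurable
  -- pointwise bounds
  have hfb : ∀ θ ∈ Θ0, ∀ x a y, |f θ (x, a, y)| ≤ |y| / ε := by
    intro θ hθ x a y
    rw [hf]
    have hπ : ε ≤ πm a x θ := hεΘ0 a x θ hθ
    have hπpos : 0 < πm a x θ := lt_of_lt_of_le hε hπ
    rw [abs_div, abs_of_pos hπpos]
    refine div_le_div₀ (abs_nonneg y) ?_ hε hπ
    rw [abs_mul]
    have : |if a = d x then (1 : ℝ) else 0| ≤ 1 := by split <;> simp
    nlinarith [abs_nonneg y]
  have hgb : ∀ θ ∈ Θ0, ∀ x a y,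
      |f θ (x, a, y) - f θ0 (x, a, y)| ≤ |y| * (L x * ‖θ - θ0‖) / ε ^ 2 := by
    intro θ hθ x a y
    rw [hf, hf]
    have h1 : ε ≤ πm a x θ := hεΘ0 a x θ hθ
    have h2 : ε ≤ πm a x θ0 := hεΘ0 a x θ0 hθ0mem
    have h1p : 0 < πm a x θ := lt_of_lt_of_le hε h1
    have h2p : 0 < πm a x θ0 := lt_of_lt_of_le hε h2
    have key : y * (if a = d x then (1 : ℝ) else 0) / πm a x θ -
        y * (if a = d x then (1 : ℝ) else 0) / πm a x θ0 =
        y * (if a = d x then (1 : ℝ) else 0) * (πm a x θ0 - πm a x θ) /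
          (πm a x θ * πm a x θ0) := by
      field_simp
    rw [key, abs_div, abs_mul, abs_mul, abs_of_pos (mul_pos h1p h2p)]
    have hLb : |πm a x θ0 - πm a x θ| ≤ L x * ‖θ - θ0‖ := by
      have := hLip a x θ0 hθ0mem θ hθ
      rwa [norm_sub_rev θ0 θ] at this
    have hLnn : 0 ≤ L x * ‖θ - θ0‖ := le_trans (abs_nonneg _) hLb
    refine div_le_div₀ (by positivity) ?_ (by positivity) ?_
    · have hi : |if a = d x then (1 : ℝ) else 0| ≤ 1 := by split <;> simp
      have e1 : |y| * |if a = d x then (1 : ℝ) else 0| * |πm a x θ0 - πm a x θ| ≤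
          |y| * |πm a x θ0 - πm a x θ| :=
        mul_le_mul_of_nonneg_right (mul_le_of_le_one_right (abs_nonneg y) hi)
          (abs_nonneg _)
      exact le_trans e1 (mul_le_mul_of_nonneg_left hLb (abs_nonneg y))
    · nlinarith
  -- pointwise square bound
  have hptw : ∀ θ ∈ Θ0, ∀ ω,
      (f θ (X ω, A ω, Y ω) - f θ0 (X ω, A ω, Y ω)) ^ 2 ≤
        (Y ω) ^ 2 * (1 + (L (X ω)) ^ 2) * (‖θ - θ0‖ ^ 2 / ε ^ 4) := by
    intro θ hθ ω
    have h := hgb θ hθ (X ω) (A ω) (Y ω)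
    have h0 : 0 ≤ |f θ (X ω, A ω, Y ω) - f θ0 (X ω, A ω, Y ω)| := abs_nonneg _
    have hsq : (f θ (X ω, A ω, Y ω) - f θ0 (X ω, A ω, Y ω)) ^ 2 ≤
        (|Y ω| * (L (X ω) * ‖θ - θ0‖) / ε ^ 2) ^ 2 := by
      rw [← sq_abs]
      exact pow_le_pow_left₀ h0 h 2
    refine le_trans hsq ?_
    have he4 : (ε ^ 2) ^ 2 = ε ^ 4 := by ring
    rw [div_pow, mul_pow, mul_pow, sq_abs, he4]
    rw [div_le_iff₀ (by positivity), mul_assoc ((Y ω) ^ 2 * (1 + (L (X ω)) ^ 2)) _ _,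
      div_mul_cancel₀ _ (by positivity : (ε:ℝ) ^ 4 ≠ 0)]
    nlinarith [sq_nonneg (Y ω * ‖θ - θ0‖)]
  -- integrability facts
  have hfint : ∀ θ ∈ Θ0, Integrable (fun ω => f θ (X ω, A ω, Y ω)) P := by
    intro θ hθ
    refine Integrable.mono' (hYint.abs.mul_const ε⁻¹)
      (((hfθm θ).comp hXAY).aestronglyMeasurable) ?_
    filter_upwards with ω
    rw [Real.norm_eq_abs]
    calc |f θ (X ω, A ω, Y ω)| ≤ |Y ω| / ε := hfb θ hθ _ _ _
      _ = |Y ω| * ε⁻¹ := div_eq_mul_inv _ _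
  have hsqint : ∀ θ ∈ Θ0, Integrable
      (fun ω => (f θ (X ω, A ω, Y ω) - f θ0 (X ω, A ω, Y ω)) ^ 2) P := by
    intro θ hθ
    refine Integrable.mono' (hLint.mul_const (‖θ - θ0‖ ^ 2 / ε ^ 4))
      ((((hgθm θ).comp hXAY).pow_const 2).aestronglyMeasurable) ?_
    filter_upwards with ω
    rw [Real.norm_eq_abs, abs_of_nonneg (sq_nonneg _)]
    exact hptw θ hθ ω
  have hmean : ∀ θ ∈ Θ0, F θ - F θ0 =
      ∫ ω, (f θ (X ω, A ω, Y ω) - f θ0 (X ω, A ω, Y ω)) ∂P := by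
    intro θ hθ
    rw [hF, hF, ← integral_sub (hfint θ hθ) (hfint θ0 hθ0mem)]
  have hVar : ∀ θ ∈ Θ0,
      ∫ ω, (f θ (X ω, A ω, Y ω) - f θ0 (X ω, A ω, Y ω)) ^ 2 ∂P ≤ C * ‖θ - θ0‖ ^ 2 := by
    intro θ hθ
    calc ∫ ω, (f θ (X ω, A ω, Y ω) - f θ0 (X ω, A ω, Y ω)) ^ 2 ∂P ≤
        ∫ ω, (Y ω) ^ 2 * (1 + (L (X ω)) ^ 2) * (‖θ - θ0‖ ^ 2 / ε ^ 4) ∂P :=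
          integral_mono (hsqint θ hθ) (hLint.mul_const _) (hptw θ hθ)
      _ = I * (‖θ - θ0‖ ^ 2 / ε ^ 4) := integral_mul_const _ _
      _ = C * ‖θ - θ0‖ ^ 2 := by rw [hCdef]; ring
  -- Chebyshev bound for fixed θ ∈ Θ0
  have hcheb : ∀ θ ∈ Θ0, ∀ m : ℕ,
      P {ω | δ < |(Real.sqrt m)⁻¹ * ∑ i ∈ Finset.range m,
          (f θ (Z i ω) - f θ0 (Z i ω) - (F θ - F θ0))|} ≤
        ENNReal.ofReal (C * ‖θ - θ0‖ ^ 2 / δ ^ 2) := by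
    intro θ hθ m
    have hident : ∀ i, IdentDistrib (fun ω => f θ (Z i ω) - f θ0 (Z i ω))
        (fun ω => f θ (X ω, A ω, Y ω) - f θ0 (X ω, A ω, Y ω)) P P := fun i =>
      (hZident i).comp (hgθm θ)
    have hWmeas : ∀ i, Measurable (fun ω => f θ (Z i ω) - f θ0 (Z i ω)) := fun i =>
      (hgθm θ).comp (hZmeas i)
    have hmem : ∀ i, MemLp (fun ω => f θ (Z i ω) - f θ0 (Z i ω)) 2 P := by
      intro i
      rw [memLp_two_iff_integrable_sq (hWmeas i).aestronglyMeasurable]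
      have hsq2 : IdentDistrib (fun ω => (f θ (Z i ω) - f θ0 (Z i ω)) ^ 2)
          (fun ω => (f θ (X ω, A ω, Y ω) - f θ0 (X ω, A ω, Y ω)) ^ 2) P P :=
        (hident i).comp (measurable_id.pow_const 2)
      exact hsq2.integrable_iff.2 (hsqint θ hθ)
    refine aux_cheb P _ ?_ hmem (F θ - F θ0) (C * ‖θ - θ0‖ ^ 2) ?_ ?_ δ hδ m
    · intro i j hij
      exact (hZindep.indepFun hij).comp (hgθm θ) (hgθm θ)
    · intro i
      rw [(hident i).integral_eq]
      exact (hmean θ hθ).symm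
    · intro i
      rw [(hident i).variance_eq]
      calc variance (fun ω => f θ (X ω, A ω, Y ω) - f θ0 (X ω, A ω, Y ω)) P ≤
          ∫ ω, (f θ (X ω, A ω, Y ω) - f θ0 (X ω, A ω, Y ω)) ^ 2 ∂P := by
            have := variance_le_expectation_sq
              (((hgθm θ).comp hXAY).aestronglyMeasurable (μ := P))
            simpa [Pi.pow_apply, Function.comp_def] using this
        _ ≤ C * ‖θ - θ0‖ ^ 2 := hVar θ hθ
  -- key splitting bound
  have hkey : ∀ η : ℝ, 0 < η → η ≤ η0 → ∀ m : ℕ,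
      P {ω | δ <
          |(Real.sqrt m)⁻¹ * ∑ i ∈ Finset.range m,
              (f (θhat (nm m) ω) (Z i ω) - F (θhat (nm m) ω))
            - (Real.sqrt m)⁻¹ * ∑ i ∈ Finset.range m,
              (f θ0 (Z i ω) - F θ0)|} ≤
        P {ω | η < ‖θhat (nm m) ω - θ0‖} + ENNReal.ofReal (C * η ^ 2 / δ ^ 2) := by
    intro η hη hηη0 m
    set Zv : Ω → ℕ → EuclideanSpace ℝ (Fin p) × Bool × ℝ := fun ω => fun i => Z i ω
      with hZvdef
    have hZv : Measurable Zv := measurable_pi_lambda _ fun i => hZmeas i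
    set Φ : EuclideanSpace ℝ (Fin p) × (ℕ → EuclideanSpace ℝ (Fin p) × Bool × ℝ) → ℝ :=
      fun q => (Real.sqrt m)⁻¹ * ∑ i ∈ Finset.range m, (f q.1 (q.2 i) - F q.1)
        - (Real.sqrt m)⁻¹ * ∑ i ∈ Finset.range m, (f θ0 (q.2 i) - F θ0) with hΦdef
    have hΦm : Measurable Φ := by
      apply Measurable.sub
      · apply Measurable.const_mul
        apply Finset.measurable_sum
        intro i _
        exact (hfm.comp (measurable_fst.prodMk
          ((measurable_pi_apply i).comp measurable_snd))).sub (hFm.comp measurable_fst)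
      · apply Measurable.const_mul
        apply Finset.measurable_sum
        intro i _
        exact ((hfθm θ0).comp ((measurable_pi_apply i).comp measurable_snd)).sub
          measurable_const
    set B : Set (EuclideanSpace ℝ (Fin p) × (ℕ → EuclideanSpace ℝ (Fin p) × Bool × ℝ)) :=
      {q | δ < |Φ q| ∧ ‖q.1 - θ0‖ ≤ η} with hBdef
    have hB : MeasurableSet B := by
      refine MeasurableSet.inter ?_ ?_
      · exact measurableSet_lt measurable_const hΦm.abs
      · exact measurableSet_le ((measurable_fst.sub measurable_const).norm) measurable_const
    have hsplit : {ω | δ <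
        |(Real.sqrt m)⁻¹ * ∑ i ∈ Finset.range m,
            (f (θhat (nm m) ω) (Z i ω) - F (θhat (nm m) ω))
          - (Real.sqrt m)⁻¹ * ∑ i ∈ Finset.range m,
            (f θ0 (Z i ω) - F θ0)|} ⊆
        {ω | η < ‖θhat (nm m) ω - θ0‖} ∪ {ω | (θhat (nm m) ω, Zv ω) ∈ B} := by
      intro ω hω
      by_cases hn : ‖θhat (nm m) ω - θ0‖ ≤ η
      · right
        exact ⟨hω, hn⟩
      · left
        exact lt_of_not_ge hn
    refine le_trans (measure_mono hsplit) (le_trans (measure_union_le _ _) ?_)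
    refine add_le_add le_rfl ?_
    refine aux_indep P (θhat (nm m)) Zv (hθmeas (nm m)) hZv (hθindep m) B hB _ ?_
    intro θ
    by_cases hθB : ‖θ - θ0‖ ≤ η
    · have hθΘ : θ ∈ Θ0 := by
        apply hball
        rw [Metric.mem_closedBall, dist_eq_norm]
        exact le_trans hθB hηη0
      have hseteq : {ω | (θ, Zv ω) ∈ B} = {ω | δ <
          |(Real.sqrt m)⁻¹ * ∑ i ∈ Finset.range m,
            (f θ (Z i ω) - f θ0 (Z i ω) - (F θ - F θ0))|} := by
        ext ω
        simp only [hBdef, Set.mem_setOf_eq, hθB, and_true]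
        have halg : Φ (θ, Zv ω) = (Real.sqrt m)⁻¹ * ∑ i ∈ Finset.range m,
            (f θ (Z i ω) - f θ0 (Z i ω) - (F θ - F θ0)) := by
          simp only [hΦdef, hZvdef]
          rw [← mul_sub, ← Finset.sum_sub_distrib]
          congr 1
          apply Finset.sum_congr rfl
          intros
          ring
        rw [halg]
      rw [hseteq]
      refine le_trans (hcheb θ hθΘ m) (ENNReal.ofReal_le_ofReal ?_)
      have : ‖θ - θ0‖ ^ 2 ≤ η ^ 2 := pow_le_pow_left₀ (norm_nonneg _) hθB 2
      gcongr
    · have : {ω | (θ, Zv ω) ∈ B} = ∅ := by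
        ext ω
        simp only [hBdef, Set.mem_setOf_eq, hθB, and_false, Set.mem_empty_iff_false]
      rw [this]
      simp
  -- final limit argument
  rw [ENNReal.tendsto_nhds_zero]
  intro ρ hρ
  have hρ2 : (0 : ℝ≥0∞) < ρ / 2 := ENNReal.half_pos hρ.ne'
  obtain ⟨r, hr0, hrρ⟩ : ∃ r : ℝ, 0 < r ∧ ENNReal.ofReal r ≤ ρ / 2 := by
    rcases eq_or_ne (ρ / 2) ⊤ with h | h
    · exact ⟨1, one_pos, by simp [h]⟩
    · exact ⟨(ρ / 2).toReal, ENNReal.toReal_pos hρ2.ne' h,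
        by rw [ENNReal.ofReal_toReal h]⟩
  set η : ℝ := min η0 (δ * Real.sqrt (r / (C + 1))) with hηdef
  have hηpos : 0 < η := by
    apply lt_min hη0
    have : 0 < r / (C + 1) := by positivity
    positivity
  have hηη0 : η ≤ η0 := min_le_left _ _
  have hbound : C * η ^ 2 / δ ^ 2 ≤ r := by
    have hη2 : η ^ 2 ≤ δ ^ 2 * (r / (C + 1)) := by
      have h1 : η ≤ δ * Real.sqrt (r / (C + 1)) := min_le_right _ _
      have h2 : η ^ 2 ≤ (δ * Real.sqrt (r / (C + 1))) ^ 2 :=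
        pow_le_pow_left₀ hηpos.le h1 2
      rwa [mul_pow, Real.sq_sqrt (by positivity : (0:ℝ) ≤ r / (C + 1))] at h2
    calc C * η ^ 2 / δ ^ 2 ≤ C * (δ ^ 2 * (r / (C + 1))) / δ ^ 2 := by gcongr
      _ = C / (C + 1) * r := by field_simp
      _ ≤ 1 * r := by
          apply mul_le_mul_of_nonneg_right _ hr0.le
          rw [div_le_one (by positivity)]
          linarith
      _ = r := one_mul r
  have hhalf : ∀ᶠ m in atTop, P {ω | η < ‖θhat (nm m) ω - θ0‖} < ρ / 2 :=
    (hθprob η hηpos).eventually_lt_const hρ2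
  filter_upwards [hhalf] with m hm
  calc P {ω | δ <
      |(Real.sqrt m)⁻¹ * ∑ i ∈ Finset.range m,
          (f (θhat (nm m) ω) (Z i ω) - F (θhat (nm m) ω))
        - (Real.sqrt m)⁻¹ * ∑ i ∈ Finset.range m,
          (f θ0 (Z i ω) - F θ0)|} ≤
      P {ω | η < ‖θhat (nm m) ω - θ0‖} + ENNReal.ofReal (C * η ^ 2 / δ ^ 2) :=
        hkey η hηpos hηη0 m
    _ ≤ ρ / 2 + ρ / 2 := add_le_add hm.le
        (le_trans (ENNReal.ofReal_le_ofReal hbound) hrρ)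
    _ = ρ := ENNReal.add_halves ρ
end
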